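/- arXiv:2202.11500 — 4 statements merged into one kernel-verified Lean document; each statement's English description precedes it below -/
import Mathlib

section
/- Let X be a Banach space and let A be the algebra of compact operators on X modulo the closure of the finite-rank operators (in operator norm). Then for every compact operator T on X, the spectrum of the equivalence class of T in the unitisation of A equals {0}; i.e., the compact-by-approximable algebra K(X)/A(X) is a radical Banach algebra. -/
open Filter Topology Metric LinearMap

set_option linter.unusedSectionVars false
set_option linter.deprecated false
set_option maxHeartbeats 1000000

namespace RieszFredholmAux

variable {𝕜 : Type*} [RCLike 𝕜] {X : Type*} [NormedAddCommGroup X] [NormedSpace 𝕜 X]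
  [CompleteSpace X]

/-- From a compact operator and a bounded sequence, extract a subsequence whose image converges. -/
lemma exists_subseq_tendsto {K : X →L[𝕜] X} (hK : IsCompactOperator K) (b : ℕ → X) {C : ℝ}
    (hb : ∀ n, ‖b n‖ ≤ C) :
    ∃ (φ : ℕ → ℕ) (u : X), StrictMono φ ∧ Tendsto (fun n => K (b (φ n))) atTop (𝓝 u) := by
  obtain ⟨M, hM, hMb⟩ := hK.image_subset_compact_of_bounded
    (isBounded_closedBall (x := (0 : X)) (r := C))
  have hmem : ∀ n, K (b n) ∈ M := fun n =>
    hMb ⟨b n, by simpa [mem_closedBall, dist_eq_norm] using hb n, rfl⟩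
  obtain ⟨u, _, φ, hφ, hconv⟩ := hM.tendsto_subseq hmem
  exact ⟨φ, u, hφ, hconv⟩

lemma no_sep {K : X →L[𝕜] X} (hK : IsCompactOperator K) (u : ℕ → X)
    (hnorm : ∀ n, ‖u n‖ ≤ 1)
    (hsep : ∀ m n, m < n → (1:ℝ)/2 ≤ ‖K (u m) - K (u n)‖) : False := by
  obtain ⟨φ, v, hφ, hconv⟩ := exists_subseq_tendsto hK u hnorm
  have hc := hconv.cauchySeq
  rw [Metric.cauchySeq_iff] at hc
  obtain ⟨N, hN⟩ := hc (1/2) (by norm_num)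
  have h1 := hsep (φ N) (φ (N+1)) (hφ (by omega))
  have h2 := hN N le_rfl (N+1) (by omega)
  rw [dist_eq_norm] at h2
  linarith


/-- A continuous linear map with finite-dimensional range is compact. -/
lemma isCompactOperator_of_finiteRank (f : X →L[𝕜] X)
    (h : FiniteDimensional 𝕜 (LinearMap.range (f : X →ₗ[𝕜] X))) : IsCompactOperator f := by
  set N := LinearMap.range (f : X →ₗ[𝕜] X) with hN
  haveI : FiniteDimensional 𝕜 N := h
  haveI : ProperSpace N := FiniteDimensional.proper 𝕜 N
  refine ⟨Subtype.val '' (Metric.closedBall (0 : N) ‖f‖),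
    (isCompact_closedBall _ _).image continuous_subtype_val, ?_⟩
  have hsub : Metric.closedBall (0 : X) 1 ⊆ f ⁻¹' (Subtype.val '' Metric.closedBall (0 : N) ‖f‖) := by
    intro x hx
    refine ⟨⟨f x, LinearMap.mem_range_self _ x⟩, ?_, rfl⟩
    simp only [mem_closedBall, dist_zero_right]
    calc ‖(⟨f x, _⟩ : N)‖ = ‖f x‖ := rfl
    _ ≤ ‖f‖ * ‖x‖ := f.le_opNorm x
    _ ≤ ‖f‖ * 1 := by
        have := mem_closedBall_zero_iff.mp hx
        exact mul_le_mul_of_nonneg_left this (norm_nonneg f)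
    _ = ‖f‖ := mul_one _
  exact Filter.mem_of_superset (Metric.closedBall_mem_nhds 0 one_pos) hsub

/-- A closed bounded subset of a finite-dimensional submodule is compact. -/
lemma isCompact_of_subset_findim {N : Submodule 𝕜 X} [FiniteDimensional 𝕜 N]
    {s : Set X} (hs : IsClosed s) (hb : Bornology.IsBounded s) (hsub : s ⊆ (N : Set X)) :
    IsCompact s := by
  haveI : ProperSpace N := FiniteDimensional.proper 𝕜 N
  have hiso : Isometry (Subtype.val : N → X) := isometry_subtype_coe
  have hpre : IsCompact (Subtype.val ⁻¹' s : Set N) := by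
    refine isCompact_of_isClosed_isBounded (hs.preimage continuous_subtype_val) ?_
    exact hiso.antilipschitz.isBounded_preimage hb
  have himg := hpre.image continuous_subtype_val
  have : Subtype.val '' (Subtype.val ⁻¹' s : Set N) = s := by
    rw [Set.image_preimage_eq_inter_range, Subtype.range_coe]
    exact Set.inter_eq_left.mpr hsub
  rwa [this] at himg

/-- Distance to a finite-dimensional submodule is attained. -/
lemma exists_min_dist (N : Submodule 𝕜 X) [FiniteDimensional 𝕜 N] (x : X) :
    ∃ z ∈ N, ∀ w ∈ N, ‖x - z‖ ≤ ‖x - w‖ := by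
  have hNc : IsClosed (N : Set X) := Submodule.closed_of_finiteDimensional N
  set s : Set X := (N : Set X) ∩ Metric.closedBall x ‖x‖ with hs
  have h0 : (0 : X) ∈ s := ⟨N.zero_mem, by simp [mem_closedBall, dist_eq_norm]⟩
  have hcomp : IsCompact s :=
    isCompact_of_subset_findim (hNc.inter isClosed_closedBall)
      (isBounded_closedBall.subset Set.inter_subset_right) Set.inter_subset_left
  obtain ⟨z, hz, hzmin⟩ := hcomp.exists_isMinOn ⟨0, h0⟩
    (Continuous.continuousOn (by continuity : Continuous fun w : X => ‖x - w‖))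
  refine ⟨z, hz.1, fun w hw => ?_⟩
  by_cases hwb : w ∈ Metric.closedBall x ‖x‖
  · exact hzmin ⟨hw, hwb⟩
  · have h1 : ‖x - z‖ ≤ ‖x‖ := by simpa using hzmin h0
    have h2 : ‖x‖ < ‖x - w‖ := by
      have := mem_closedBall.not.mp hwb
      rw [dist_comm, dist_eq_norm] at this
      linarith [not_le.mp this]
    linarith


lemma findim_ker {K : X →L[𝕜] X} (hK : IsCompactOperator K) :
    FiniteDimensional 𝕜 ((1 - K : X →L[𝕜] X).ker) := by
  set N := (1 - K : X →L[𝕜] X).ker with hNdef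
  obtain ⟨M, hM, hMb⟩ := hK.image_subset_compact_of_bounded
    (isBounded_closedBall (x := (0 : X)) (r := 1))
  apply FiniteDimensional.of_isCompact_closedBall₀ 𝕜 (r := 1) one_pos
  -- the closed unit ball of N is compact
  have hNc : IsClosed (N : Set X) := ContinuousLinearMap.isClosed_ker (1 - K : X →L[𝕜] X)
  set s : Set X := (N : Set X) ∩ Metric.closedBall 0 1 with hs
  have hscomp : IsCompact s := by
    refine hM.of_isClosed_subset (hNc.inter isClosed_closedBall) ?_
    rintro x ⟨hxN, hxb⟩
    have hfix : x = K x := by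
      have : (1 - K : X →L[𝕜] X) x = 0 := hxN
      simpa [sub_eq_zero, ContinuousLinearMap.sub_apply] using this
    exact hfix ▸ hMb ⟨x, hxb, rfl⟩
  have heq : (Subtype.val '' (Metric.closedBall (0 : N) 1) : Set X) = s := by
    ext x
    constructor
    · rintro ⟨⟨y, hy⟩, hyb, rfl⟩
      exact ⟨hy, by simpa [mem_closedBall, dist_eq_norm] using hyb⟩
    · rintro ⟨hxN, hxb⟩
      exact ⟨⟨x, hxN⟩, by simpa [mem_closedBall, dist_eq_norm] using hxb, rfl⟩
  have := Topology.IsEmbedding.subtypeVal.isCompact_iff (s := Metric.closedBall (0 : N) 1)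
  rw [this, heq]
  exact hscomp

lemma closed_range_one_sub {K : X →L[𝕜] X} (hK : IsCompactOperator K) :
    IsClosed (((1 - K : X →L[𝕜] X).range) : Set X) := by
  set A : X →L[𝕜] X := 1 - K with hA
  set N := A.ker with hNdef
  haveI hNfin : FiniteDimensional 𝕜 N := findim_ker hK
  have hKA : ∀ w : X, A w = w - K w := fun w => rfl
  refine IsSeqClosed.isClosed ?_
  intro x y hxmem hxy
  -- choose preimages
  choose a ha using hxmem
  -- choose nearest points in the kernel
  have hmin : ∀ n : ℕ, ∃ z ∈ N, ∀ w ∈ N, ‖a n - z‖ ≤ ‖a n - w‖ := fun n => exists_min_dist N _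
  choose z hz hzmin using hmin
  set v : ℕ → X := fun n => a n - z n with hv
  have hAv : ∀ n, A (v n) = x n := by
    intro n
    have hz0 : A (z n) = 0 := hz n
    simpa [hv, map_sub, hz0] using ha n
  have hvmin : ∀ n, ∀ w ∈ N, ‖v n‖ ≤ ‖v n - w‖ := by
    intro n w hw
    have := hzmin n (z n + w) (N.add_mem (hz n) hw)
    calc ‖v n‖ = ‖a n - z n‖ := rfl
    _ ≤ ‖a n - (z n + w)‖ := this
    _ = ‖v n - w‖ := by rw [sub_add_eq_sub_sub]
  -- x is bounded
  obtain ⟨Cx, hCx⟩ : ∃ Cx : ℝ, ∀ n, ‖x n‖ ≤ Cx := by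
    obtain ⟨Cx, hCx'⟩ := hxy.norm.bddAbove_range
    exact ⟨Cx, fun n => hCx' ⟨n, rfl⟩⟩
  -- v is bounded
  have hvbdd : ∃ C : ℝ, ∀ n, ‖v n‖ ≤ C := by
    by_contra hunb
    push_neg at hunb
    have hsel : ∀ j : ℕ, ∃ n, (j : ℝ) + 1 < ‖v n‖ := fun j => hunb ((j : ℝ) + 1)
    choose ψ hψ using hsel
    set w : ℕ → X := fun j => ((‖v (ψ j)‖ : 𝕜))⁻¹ • v (ψ j) with hw
    have hvpos : ∀ j, (0 : ℝ) < ‖v (ψ j)‖ := fun j => lt_of_le_of_lt (by positivity) (hψ j)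
    have hwnorm : ∀ j, ‖w j‖ = 1 := by
      intro j
      rw [hw]
      simp only [norm_smul, norm_inv, RCLike.norm_ofReal, abs_of_pos (hvpos j)]
      rw [inv_mul_cancel₀ (hvpos j).ne']
    -- A (w j) → 0
    have hAw : Tendsto (fun j => A (w j)) atTop (𝓝 0) := by
      rw [tendsto_zero_iff_norm_tendsto_zero]
      have hb : ∀ j, ‖A (w j)‖ ≤ Cx * (1 / ((j : ℝ) + 1)) := by
        intro j
        have : A (w j) = ((‖v (ψ j)‖ : 𝕜))⁻¹ • x (ψ j) := by rw [hw, map_smul, hAv]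
        rw [this]
        simp only [norm_smul, norm_inv, RCLike.norm_ofReal, abs_of_pos (hvpos j)]
        rw [inv_mul_eq_div, div_le_iff₀ (hvpos j)]
        have hCx0 : (0:ℝ) ≤ Cx := le_trans (norm_nonneg _) (hCx 0)
        calc ‖x (ψ j)‖ ≤ Cx := hCx _
        _ = Cx * (1 / ((j:ℝ)+1)) * ((j:ℝ)+1) := by field_simp
        _ ≤ Cx * (1 / ((j : ℝ) + 1)) * ‖v (ψ j)‖ :=
            mul_le_mul_of_nonneg_left (hψ j).le (by positivity)
      refine squeeze_zero (fun j => norm_nonneg _) hb ?_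
      have := tendsto_one_div_add_atTop_nhds_zero_nat (𝕜 := ℝ)
      simpa using this.const_mul Cx
    obtain ⟨φ, u, hφ, hKw⟩ := exists_subseq_tendsto hK w (C := 1) (fun j => (hwnorm j).le)
    have hwconv : Tendsto (fun j => w (φ j)) atTop (𝓝 u) := by
      have : ∀ j, w (φ j) = A (w (φ j)) + K (w (φ j)) := by
        intro j; rw [hKA]; abel
      rw [funext this]
      have hAw' : Tendsto (fun j => A (w (φ j))) atTop (𝓝 0) := hAw.comp hφ.tendsto_atTop
      simpa using hAw'.add hKw
    have huN : u ∈ N := by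
      have h1 : Tendsto (fun j => A (w (φ j))) atTop (𝓝 (A u)) := (A.continuous.tendsto u).comp hwconv
      have h2 : Tendsto (fun j => A (w (φ j))) atTop (𝓝 0) := hAw.comp hφ.tendsto_atTop
      exact LinearMap.mem_ker.mpr (tendsto_nhds_unique h1 h2)
    -- but w j is 1-separated from N
    have hwsep : ∀ j, ∀ u' ∈ N, (1:ℝ) ≤ ‖w j - u'‖ := by
      intro j u' hu'
      have hm := hvmin (ψ j) ((‖v (ψ j)‖ : 𝕜) • u') (N.smul_mem _ hu')
      have : w j - u' = ((‖v (ψ j)‖ : 𝕜))⁻¹ • (v (ψ j) - (‖v (ψ j)‖ : 𝕜) • u') := by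
        rw [hw, smul_sub, inv_smul_smul₀]
        exact_mod_cast (RCLike.ofReal_ne_zero).mpr (ne_of_gt (hvpos j))
      rw [this]
      simp only [norm_smul, norm_inv, RCLike.norm_ofReal, abs_of_pos (hvpos j)]
      rw [le_inv_mul_iff₀ (hvpos j), mul_one]
      exact hm
    have : (1:ℝ) ≤ 0 := by
      have hlim : Tendsto (fun j => ‖w (φ j) - u‖) atTop (𝓝 0) :=
        tendsto_iff_norm_sub_tendsto_zero.mp hwconv
      have hge : ∀ j, (1:ℝ) ≤ ‖w (φ j) - u‖ := fun j => hwsep (φ j) u huN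
      exact le_of_tendsto_of_tendsto tendsto_const_nhds hlim (Eventually.of_forall hge)
    linarith
  obtain ⟨C, hC⟩ := hvbdd
  obtain ⟨φ, u, hφ, hKv⟩ := exists_subseq_tendsto hK v hC
  have hvconv : Tendsto (fun j => v (φ j)) atTop (𝓝 (y + u)) := by
    have heq : ∀ j, v (φ j) = x (φ j) + K (v (φ j)) := by
      intro j; rw [← hAv (φ j)]
      rw [hKA]; abel
    rw [funext heq]
    exact (hxy.comp hφ.tendsto_atTop).add hKv
  refine ⟨y + u, ?_⟩
  have h1 : Tendsto (fun j => A (v (φ j))) atTop (𝓝 (A (y + u))) :=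
    (A.continuous.tendsto _).comp hvconv
  have h2 : Tendsto (fun j => A (v (φ j))) atTop (𝓝 y) := by
    have : ∀ j, A (v (φ j)) = x (φ j) := fun j => hAv (φ j)
    rw [funext this]
    exact hxy.comp hφ.tendsto_atTop
  exact tendsto_nhds_unique h1 h2


/-- Riesz-lemma vector in `W` almost-separated from a strictly smaller closed `V`. -/
lemma riesz_seq {V W : Submodule 𝕜 X} (hVW : V ≤ W) (hne : V ≠ W)
    (hVc : IsClosed (V : Set X)) :
    ∃ u : X, u ∈ W ∧ ‖u‖ = 1 ∧ ∀ w ∈ V, (1:ℝ)/2 ≤ ‖u - w‖ := by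
  set F : Submodule 𝕜 W := V.comap W.subtype with hF
  have hFc : IsClosed (F : Set W) := hVc.preimage continuous_subtype_val
  have hex : ∃ x : W, x ∉ F := by
    obtain ⟨v, hvW, hvV⟩ := SetLike.exists_of_lt (lt_of_le_of_ne hVW hne)
    exact ⟨⟨v, hvW⟩, hvV⟩
  obtain ⟨x₀, hx₀F, hx₀⟩ := riesz_lemma hFc hex (r := 1/2) (by norm_num)
  have hx₀ne : ‖(x₀ : X)‖ ≠ 0 := by
    simp only [ne_eq, norm_eq_zero]
    intro h
    apply hx₀F
    have : x₀ = 0 := by ext; simp [h]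
    rw [this]; exact F.zero_mem
  have hx₀pos : (0:ℝ) < ‖(x₀ : X)‖ := lt_of_le_of_ne (norm_nonneg _) (Ne.symm hx₀ne)
  set c : 𝕜 := (‖(x₀ : X)‖ : 𝕜) with hc
  have hcne : c ≠ 0 := by
    rw [hc]
    exact_mod_cast RCLike.ofReal_ne_zero.mpr hx₀ne
  refine ⟨c⁻¹ • (x₀ : X), W.smul_mem _ x₀.2, ?_, ?_⟩
  · rw [norm_smul, norm_inv, hc, RCLike.norm_ofReal, abs_of_pos hx₀pos,
      inv_mul_cancel₀ hx₀ne]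
  · intro w hw
    have hcw : c • w ∈ V := V.smul_mem _ hw
    have hy : (⟨c • w, hVW hcw⟩ : W) ∈ F := hcw
    have := hx₀ ⟨c • w, hVW hcw⟩ hy
    have hnormW : ‖x₀ - ⟨c • w, hVW hcw⟩‖ = ‖(x₀ : X) - c • w‖ := rfl
    have heq : c⁻¹ • (x₀ : X) - w = c⁻¹ • ((x₀ : X) - c • w) := by
      rw [smul_sub, inv_smul_smul₀ hcne]
    rw [heq, norm_smul, norm_inv, hc, RCLike.norm_ofReal, abs_of_pos hx₀pos]
    rw [le_inv_mul_iff₀ hx₀pos]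
    calc ‖(x₀ : X)‖ * (1/2) = 1/2 * ‖x₀‖ := by rw [Submodule.norm_coe]; ring
    _ ≤ ‖x₀ - ⟨c • w, hVW hcw⟩‖ := this
    _ = ‖(x₀ : X) - c • w‖ := hnormW

/-- Powers of `1 - K` are of the form `1 - K'` with `K'` compact. -/
lemma pow_one_sub {K : X →L[𝕜] X} (hK : IsCompactOperator K) (n : ℕ) :
    ∃ K' : X →L[𝕜] X, IsCompactOperator K' ∧ (1 - K)^n = 1 - K' := by
  induction n with
  | zero => exact ⟨0, isCompactOperator_zero, by simp⟩
  | succ n ih =>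
    obtain ⟨K', hK', hEq⟩ := ih
    refine ⟨K + K' - K' * K, ?_, ?_⟩
    · have h1 : IsCompactOperator (⇑K' ∘ ⇑K) := hK.clm_comp K'
      have h2 : IsCompactOperator (⇑K + ⇑K') := hK.add hK'
      have h3 : IsCompactOperator ((⇑K + ⇑K') - ⇑K' ∘ ⇑K) := h2.sub h1
      convert h3 using 1
      rfl
    · rw [pow_succ, hEq]
      noncomm_ring


section Chains

variable {K : X →L[𝕜] X}

lemma ker_pow_mono (n : ℕ) :
    ((1-K)^n : X →L[𝕜] X).ker ≤ ((1-K)^(n+1) : X →L[𝕜] X).ker := by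
  intro x hx
  rw [LinearMap.mem_ker] at hx ⊢
  rw [pow_succ']
  simp only [ContinuousLinearMap.coe_coe, ContinuousLinearMap.mul_apply] at hx ⊢
  simp only [hx, map_zero]

lemma range_pow_anti (n : ℕ) :
    ((1-K)^(n+1) : X →L[𝕜] X).range ≤ ((1-K)^n : X →L[𝕜] X).range := by
  rintro y ⟨x, rfl⟩
  rw [pow_succ]
  exact ⟨(1-K) x, rfl⟩

lemma K_eq (x : X) : K x = x - (1-K) x := by
  simp [ContinuousLinearMap.sub_apply]

lemma ascent (hK : IsCompactOperator K) :
    ∃ n, ((1-K)^(n+1) : X →L[𝕜] X).ker = ((1-K)^n : X →L[𝕜] X).ker := by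
  by_contra h
  push_neg at h
  set A : X →L[𝕜] X := 1 - K with hA
  have hmono : Monotone fun n => (A^n : X →L[𝕜] X).ker :=
    monotone_nat_of_le_succ ker_pow_mono
  have hstep : ∀ n, ∃ u : X, u ∈ (A^(n+1)).ker ∧ ‖u‖ = 1 ∧
      ∀ w ∈ (A^n).ker, (1:ℝ)/2 ≤ ‖u - w‖ := by
    intro n
    exact riesz_seq (ker_pow_mono n) (fun e => h n (e.symm ▸ rfl) ) (ContinuousLinearMap.isClosed_ker _)
  choose u hu hnorm hsep using hstep
  refine no_sep hK u (fun n => (hnorm n).le) ?_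
  intro m n hmn
  -- K u_m - K u_n = -(u_n - g) with g ∈ ker A^n
  have hg : (A (u n) + u m - A (u m)) ∈ (A^n : X →L[𝕜] X).ker := by
    have h1 : A (u n) ∈ (A^n : X →L[𝕜] X).ker := by
      rw [LinearMap.mem_ker]
      have := hu n
      rw [LinearMap.mem_ker] at this
      calc (A^n) (A (u n)) = (A^n * A) (u n) := rfl
      _ = (A^(n+1)) (u n) := by rw [← pow_succ]
      _ = 0 := this
    have h2 : u m ∈ (A^n : X →L[𝕜] X).ker := hmono hmn (hu m)
    have h3 : A (u m) ∈ (A^n : X →L[𝕜] X).ker := by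
      apply hmono (Nat.succ_le_of_lt hmn)
      rw [LinearMap.mem_ker]
      have := hu m
      rw [LinearMap.mem_ker] at this
      calc (A^(m+1)) (A (u m)) = (A^(m+1) * A) (u m) := rfl
      _ = (A^(m+2)) (u m) := by rw [← pow_succ]
      _ = (A * A^(m+1)) (u m) := by rw [← pow_succ']
      _ = A ((A^(m+1)) (u m)) := rfl
      _ = 0 := by exact (congrArg A this).trans (map_zero A)
    exact Submodule.sub_mem _ (Submodule.add_mem _ h1 h2) h3
  have key : K (u m) - K (u n) = -(u n - (A (u n) + u m - A (u m))) := by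
    rw [K_eq (u m), K_eq (u n)]
    show u m - A (u m) - (u n - A (u n)) = _
    abel
  rw [key, norm_neg]
  exact hsep n _ hg

lemma closed_range_pow (hK : IsCompactOperator K) (n : ℕ) :
    IsClosed ((((1-K)^n : X →L[𝕜] X).range) : Set X) := by
  obtain ⟨K', hK', hEq⟩ := pow_one_sub hK n
  rw [hEq]
  exact closed_range_one_sub hK'

lemma findim_ker_pow (hK : IsCompactOperator K) (n : ℕ) :
    FiniteDimensional 𝕜 (((1-K)^n : X →L[𝕜] X).ker) := by
  obtain ⟨K', hK', hEq⟩ := pow_one_sub hK n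
  rw [hEq]
  exact findim_ker hK'

lemma descent (hK : IsCompactOperator K) :
    ∃ n, ((1-K)^(n+1) : X →L[𝕜] X).range
       = ((1-K)^n : X →L[𝕜] X).range := by
  by_contra h
  push_neg at h
  set A : X →L[𝕜] X := 1 - K with hA
  have hanti : Antitone fun n => (A^n : X →L[𝕜] X).range :=
    antitone_nat_of_succ_le range_pow_anti
  have hstep : ∀ n, ∃ u : X, u ∈ (A^n).range ∧ ‖u‖ = 1 ∧
      ∀ w ∈ (A^(n+1)).range, (1:ℝ)/2 ≤ ‖u - w‖ := by
    intro n
    exact riesz_seq (range_pow_anti n) (h n) (closed_range_pow hK (n+1))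
  choose u hu hnorm hsep using hstep
  refine no_sep hK u (fun n => (hnorm n).le) ?_
  intro m n hmn
  have hpow : ∀ (k : ℕ) (x : X), (A^(k+1)) x = A ((A^k) x) := by
    intro k x
    rw [pow_succ']
    rfl
  have hg : (A (u m) + u n - A (u n)) ∈ (A^(m+1) : X →L[𝕜] X).range := by
    have h1 : A (u m) ∈ (A^(m+1) : X →L[𝕜] X).range := by
      obtain ⟨w, hw⟩ := hu m
      exact ⟨w, by rw [ContinuousLinearMap.coe_coe, hpow, ← hw]; rfl⟩
    have h2 : u n ∈ (A^(m+1) : X →L[𝕜] X).range :=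
      hanti (Nat.succ_le_of_lt hmn) (hu n)
    have h3 : A (u n) ∈ (A^(m+1) : X →L[𝕜] X).range := by
      apply hanti (Nat.succ_le_succ hmn.le)
      obtain ⟨w, hw⟩ := hu n
      exact ⟨w, by rw [ContinuousLinearMap.coe_coe, hpow, ← hw]; rfl⟩
    exact Submodule.sub_mem _ (Submodule.add_mem _ h1 h2) h3
  have key : K (u m) - K (u n) = u m - (A (u m) + u n - A (u n)) := by
    rw [K_eq (u m), K_eq (u n)]
    abel
  rw [key]
  exact hsep m _ hg

lemma ker_stab {p : ℕ}
    (hp : ((1-K)^(p+1) : X →L[𝕜] X).ker = ((1-K)^p : X →L[𝕜] X).ker) :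
    ∀ k, ((1-K)^(p+k) : X →L[𝕜] X).ker = ((1-K)^p : X →L[𝕜] X).ker := by
  set A : X →L[𝕜] X := 1 - K with hA
  intro k
  induction k with
  | zero => rfl
  | succ k ih =>
    apply le_antisymm
    · intro x hx
      rw [LinearMap.mem_ker] at hx
      have hAx : A x ∈ (A^(p+k) : X →L[𝕜] X).ker := by
        rw [LinearMap.mem_ker]
        calc (A^(p+k)) (A x) = (A^(p+k) * A) x := rfl
        _ = (A^(p+k+1)) x := by rw [← pow_succ]
        _ = 0 := hx
      rw [ih] at hAx
      have : x ∈ (A^(p+1) : X →L[𝕜] X).ker := by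
        rw [LinearMap.mem_ker]
        calc (A^(p+1)) x = (A^p) (A x) := by rw [pow_succ]; rfl
        _ = 0 := hAx
      rw [hp] at this
      exact this
    · have := monotone_nat_of_le_succ (ker_pow_mono (K := K)) (Nat.le_add_right p (k+1))
      exact this

lemma range_stab {q : ℕ}
    (hq : ((1-K)^(q+1) : X →L[𝕜] X).range = ((1-K)^q : X →L[𝕜] X).range) :
    ∀ k, ((1-K)^(q+k) : X →L[𝕜] X).range = ((1-K)^q : X →L[𝕜] X).range := by
  set A : X →L[𝕜] X := 1 - K with hA
  have hmap : ∀ n : ℕ, (A^(n+1) : X →L[𝕜] X).range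
      = Submodule.map (A : X →ₗ[𝕜] X) ((A^n : X →L[𝕜] X).range) := by
    intro n
    ext y
    constructor
    · rintro ⟨x, rfl⟩
      rw [pow_succ']
      exact ⟨(A^n) x, ⟨x, rfl⟩, rfl⟩
    · rintro ⟨z, ⟨x, rfl⟩, rfl⟩
      refine ⟨x, ?_⟩
      rw [pow_succ']
      rfl
  intro k
  induction k with
  | zero => rfl
  | succ k ih =>
    calc (A^(q+k+1) : X →L[𝕜] X).range
        = Submodule.map (A : X →ₗ[𝕜] X) ((A^(q+k) : X →L[𝕜] X).range) := hmap _
    _ = Submodule.map (A : X →ₗ[𝕜] X) ((A^q : X →L[𝕜] X).range) := by rw [ih]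
    _ = (A^(q+1) : X →L[𝕜] X).range := (hmap q).symm
    _ = (A^q : X →L[𝕜] X).range := hq

end Chains

/-- **Riesz splitting**: for a compact `K`, the operator `1 - K` is invertible modulo
finite-rank operators, with the defect a finite-rank projection `P`. -/
theorem riesz_splitting {K : X →L[𝕜] X} (hK : IsCompactOperator K) :
    ∃ S P : X →L[𝕜] X, FiniteDimensional 𝕜 (LinearMap.range (P : X →ₗ[𝕜] X)) ∧
      (1 - K) * S = 1 - P ∧ S * (1 - K) = 1 - P := by
  classical
  set A : X →L[𝕜] X := 1 - K with hA
  obtain ⟨p, hp⟩ := ascent hK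
  obtain ⟨q, hq⟩ := descent hK
  set n : ℕ := p + q + 1 with hn
  -- stabilized kernel and range
  have hkerm : ∀ m, p ≤ m → (A^m : X →L[𝕜] X).ker = (A^p : X →L[𝕜] X).ker := by
    intro m hm
    obtain ⟨k, rfl⟩ := Nat.exists_eq_add_of_le hm
    exact ker_stab hp k
  have hranm : ∀ m, q ≤ m → (A^m : X →L[𝕜] X).range = (A^q : X →L[𝕜] X).range := by
    intro m hm
    obtain ⟨k, rfl⟩ := Nat.exists_eq_add_of_le hm
    exact range_stab hq k
  set N : Submodule 𝕜 X := (A^n : X →L[𝕜] X).ker with hNdef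
  set R : Submodule 𝕜 X := (A^n : X →L[𝕜] X).range with hRdef
  have hker2n : (A^(2*n) : X →L[𝕜] X).ker = N := by
    rw [hNdef, hkerm (2*n) (by omega), hkerm n (by omega)]
  have hran2n : (A^(2*n) : X →L[𝕜] X).range = R := by
    rw [hRdef, hranm (2*n) (by omega), hranm n (by omega)]
  have hpow : ∀ (j k : ℕ) (x : X), (A^(j+k)) x = (A^j) ((A^k) x) := by
    intro j k x
    rw [pow_add]
    rfl
  -- complementarity
  have hcompl : IsCompl N R := by
    constructor
    · rw [disjoint_iff]
      ext x
      simp only [Submodule.mem_inf, Submodule.mem_bot]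
      constructor
      · rintro ⟨hxN, y, rfl⟩
        have : y ∈ (A^(2*n) : X →L[𝕜] X).ker := by
          rw [LinearMap.mem_ker]
          have hxN' : (A^n) ((A^n) y) = 0 := hxN
          calc (A^(2*n)) y = (A^(n+n)) y := by norm_num [two_mul]
          _ = (A^n) ((A^n) y) := hpow n n y
          _ = 0 := hxN'
        rw [hker2n] at this
        exact this
      · rintro rfl
        exact ⟨N.zero_mem, R.zero_mem⟩
    · rw [codisjoint_iff, eq_top_iff]
      intro x _
      have hx : (A^n) x ∈ (A^(2*n) : X →L[𝕜] X).range := by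
        rw [hran2n]
        exact ⟨x, rfl⟩
      obtain ⟨z, hz⟩ := hx
      have h1 : x - (A^n) z ∈ N := by
        rw [hNdef, LinearMap.mem_ker, map_sub]
        have : (A^n) ((A^n) z) = (A^n) x := by
          rw [← hpow n n z]
          rw [show n + n = 2*n by ring]
          exact hz
        rw [ContinuousLinearMap.coe_coe, this, sub_self]
      have h2 : (A^n) z ∈ R := ⟨z, rfl⟩
      rw [Submodule.mem_sup]
      exact ⟨x - (A^n) z, h1, (A^n) z, h2, by abel⟩
  haveI hNfin : FiniteDimensional 𝕜 N := findim_ker_pow hK n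
  have hNc : IsClosed (N : Set X) := ContinuousLinearMap.isClosed_ker _
  have hRc : IsClosed (R : Set X) := closed_range_pow hK n
  -- continuous projections
  set πN : X →L[𝕜] N := N.linearProjOfClosedCompl R hcompl hNc hRc with hπN
  set πR : X →L[𝕜] R := R.linearProjOfClosedCompl N hcompl.symm hRc hNc with hπR
  set P : X →L[𝕜] X := N.subtypeL.comp πN with hP
  have hdecomp : ∀ x : X, (P x) + ((πR x : X)) = x := by
    intro x
    exact Submodule.projection_add_projection_eq_self hcompl x
  -- A maps R into R
  have hmapsto : ∀ x : R, A (x : X) ∈ R := by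
    rintro ⟨x, y, rfl⟩
    refine ⟨A y, ?_⟩
    calc (A^n) (A y) = (A^n * A) y := rfl
    _ = (A * A^n) y := by rw [← pow_succ, ← pow_succ']
    _ = A ((A^n) y) := rfl
  set AR : R →L[𝕜] R := (A.comp R.subtypeL).codRestrict R (fun x => hmapsto x) with hAR
  have hARapp : ∀ x : R, ((AR x : X)) = A (x : X) := fun x => rfl
  -- AR is bijective
  have hinj : AR.ker = ⊥ := by
    rw [LinearMap.ker_eq_bot']
    intro x hx
    have hx' : A (x : X) = 0 := by
      have := congrArg (Subtype.val) hx
      simpa [hARapp] using this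
    have hxN : (x : X) ∈ N := by
      rw [hNdef, LinearMap.mem_ker]
      have hn1 : n = (n-1) + 1 := by omega
      rw [hn1, pow_succ]
      show (A^(n-1)) (A (x : X)) = 0
      rw [hx', map_zero]
    have : (x : X) ∈ N ⊓ R := ⟨hxN, x.2⟩
    rw [disjoint_iff.mp hcompl.disjoint] at this
    exact Subtype.ext this
  have hsurj : AR.range = ⊤ := by
    rw [LinearMap.range_eq_top]
    rintro ⟨y, hy⟩
    have hy' : y ∈ (A^(n+1) : X →L[𝕜] X).range := by
      rw [hranm (n+1) (by omega), ← hranm n (by omega)]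
      exact hy
    obtain ⟨z, hz⟩ := hy'
    refine ⟨⟨(A^n) z, ⟨z, rfl⟩⟩, ?_⟩
    apply Subtype.ext
    show A ((A^n) z) = y
    have h1n : (A^(1+n)) z = A ((A^n) z) := by rw [hpow 1 n z, pow_one]
    calc A ((A^n) z) = (A^(1+n)) z := h1n.symm
    _ = (A^(n+1)) z := by rw [Nat.add_comm]
    _ = y := hz
  haveI : CompleteSpace R := hRc.completeSpace_coe
  set e : R ≃L[𝕜] R := ContinuousLinearEquiv.ofBijective AR hinj hsurj with he
  set S : X →L[𝕜] X := R.subtypeL.comp ((e.symm : R →L[𝕜] R).comp πR) with hS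
  -- finite rank of P
  have hPfin : FiniteDimensional 𝕜 (LinearMap.range (P : X →ₗ[𝕜] X)) := by
    have hle : LinearMap.range (P : X →ₗ[𝕜] X) ≤ N := by
      rintro y ⟨x, rfl⟩
      exact (πN x).2
    exact Submodule.finiteDimensional_of_le hle
  refine ⟨S, P, hPfin, ?_, ?_⟩
  · ext x
    have h1 : (A * S) x = A (S x) := rfl
    have h2 : S x = ((e.symm (πR x) : R) : X) := rfl
    have h3 : A (S x) = ((AR (e.symm (πR x)) : R) : X) := rfl
    have h4 : AR (e.symm (πR x)) = πR x := e.apply_symm_apply (πR x)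
    have : (A * S) x = ((πR x : R) : X) := by rw [h1, h3, h4]
    rw [this]
    have := hdecomp x
    show ((πR x : R) : X) = (1 - P) x
    simp only [ContinuousLinearMap.sub_apply, ContinuousLinearMap.one_apply]
    exact eq_sub_of_add_eq' (hdecomp x)
  · ext x
    set vR : R := πR x with hvRdef
    have hxdec : A x = A (P x) + A (vR : X) := by
      conv_lhs => rw [← hdecomp x]
      rw [map_add]
    have hAPxN : A (P x) ∈ N := by
      rw [hNdef, LinearMap.mem_ker]
      have hPxN : (A^n) (P x) = 0 := (πN x).2
      calc (A^n) (A (P x)) = (A^(n+1)) (P x) := by rw [pow_succ]; rfl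
      _ = (A^(1+n)) (P x) := by rw [Nat.add_comm]
      _ = A ((A^n) (P x)) := by rw [hpow 1 n, pow_one]
      _ = 0 := by rw [hPxN, map_zero]
    have hπRfun : ⇑πR = R.linearProjOfIsCompl N hcompl.symm :=
      Submodule.coe_continuous_linearProjOfClosedCompl' hcompl.symm hRc hNc
    have h0 : πR (A (P x)) = 0 := by
      rw [hπRfun]
      exact Submodule.linearProjOfIsCompl_apply_right' hcompl.symm hAPxN
    have hAv : A (vR : X) ∈ R := hmapsto vR
    have h1 : πR (A (vR : X)) = ⟨A (vR : X), hAv⟩ := by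
      rw [hπRfun]
      exact Submodule.linearProjOfIsCompl_apply_left hcompl.symm ⟨A (vR : X), hAv⟩
    have hARv : AR vR = ⟨A (vR : X), hAv⟩ := rfl
    have h2 : πR (A x) = AR vR := by
      rw [hxdec, map_add, h0, zero_add, h1, hARv]
    have h3 : (S * A) x = ((e.symm (πR (A x)) : R) : X) := rfl
    have h4 : e.symm (AR vR) = vR := by
      have he' : e vR = AR vR := rfl
      rw [← he', ContinuousLinearEquiv.symm_apply_apply]
    rw [h3, h2, h4]
    show ((vR : R) : X) = (1 - P) x
    simp only [ContinuousLinearMap.sub_apply, ContinuousLinearMap.one_apply]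
    exact eq_sub_of_add_eq' (hdecomp x)


end RieszFredholmAux

/-- **The compact-by-approximable algebra is radical.**
Let `X` be a Banach space and consider the quotient algebra `𝔄_X = K(X)/A(X)` of the compact
operators modulo the operator-norm closure of the finite-rank operators.  For a compact operator
`T`, the spectrum of the coset `[T]` in the unitisation `𝔄_X^#` equals `{0}`.  Equivalently
(since an element `λ·1 - [T]` of the unitisation can only be invertible when `λ ≠ 0`, with an
inverse necessarily of the form `λ⁻¹·1 + [R]` with `R` compact, so that `0` always belongs to
the spectrum): for every scalar `λ ≠ 0` there exists a compact operator `R` such that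
`λ•R - λ⁻¹•T - T∘R` and `λ•R - λ⁻¹•T - R∘T` both lie in `A(X)`, which says exactly that
`(λ·1 - [T]) · (λ⁻¹·1 + [R]) = 1 = (λ⁻¹·1 + [R]) · (λ·1 - [T])` in the unitisation. -/
theorem stmt_1 {𝕜 : Type*} [RCLike 𝕜] {X : Type*} [NormedAddCommGroup X] [NormedSpace 𝕜 X]
    [CompleteSpace X] (T : X →L[𝕜] X) (hT : IsCompactOperator T) :
    ∀ lam : 𝕜, lam ≠ 0 →
      ∃ R : X →L[𝕜] X, IsCompactOperator R ∧
        lam • R - lam⁻¹ • T - T.comp R ∈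
          closure {G : X →L[𝕜] X | FiniteDimensional 𝕜 (LinearMap.range (G : X →ₗ[𝕜] X))} ∧
        lam • R - lam⁻¹ • T - R.comp T ∈
          closure {G : X →L[𝕜] X | FiniteDimensional 𝕜 (LinearMap.range (G : X →ₗ[𝕜] X))} := by
  intro lam hlam
  set K : X →L[𝕜] X := lam⁻¹ • T with hKdef
  have hKc : IsCompactOperator K := hT.smul lam⁻¹
  obtain ⟨S, P, hPfin, hAS, hSA⟩ := RieszFredholmAux.riesz_splitting hKc
  set R : X →L[𝕜] X := lam⁻¹ • (S - 1) with hRdef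
  have hlamR : lam • R = S - 1 := by
    rw [hRdef, smul_smul, mul_inv_cancel₀ hlam, one_smul]
  -- compactness of R
  have hRc : IsCompactOperator R := by
    have hSK : IsCompactOperator (S * K) := by
      have h1 : IsCompactOperator (⇑S ∘ ⇑K) := hKc.clm_comp S
      convert h1 using 1
      rfl
    have hPc : IsCompactOperator P := RieszFredholmAux.isCompactOperator_of_finiteRank P hPfin
    have hS1 : S - 1 = S * K - P := by
      have : S * (1 - K) = S - S * K := by noncomm_ring
      rw [this] at hSA
      -- S - S*K = 1 - P  ⇒  S - 1 = S*K - P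
      have := hSA
      abel_nf at this ⊢
      linear_combination (norm := abel_nf) this
    have : IsCompactOperator (S * K - P : X →L[𝕜] X) := by
      have := hSK.sub hPc
      exact this
    rw [hRdef, hS1]
    exact this.smul lam⁻¹
  -- the two differences equal -P
  have hTR : lam • R - lam⁻¹ • T - T.comp R = -P := by
    have hcomp : T.comp R = T * R := rfl
    have hTR' : T * R = lam⁻¹ • (T * S) - lam⁻¹ • T := by
      rw [hRdef, mul_smul_comm, mul_sub, mul_one, smul_sub]
    have hAS' : S - lam⁻¹ • (T * S) = 1 - P := by
      have : (1 - K) * S = S - lam⁻¹ • (T * S) := by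
        rw [hKdef, sub_mul, one_mul, smul_mul_assoc]
      rw [← this, hAS]
    have : lam • R - lam⁻¹ • T - T.comp R
        = (S - lam⁻¹ • (T * S)) - 1 := by
      rw [hlamR, hcomp, hTR']
      abel
    rw [this, hAS']
    abel
  have hRT : lam • R - lam⁻¹ • T - R.comp T = -P := by
    have hcomp : R.comp T = R * T := rfl
    have hRT' : R * T = lam⁻¹ • (S * T) - lam⁻¹ • T := by
      rw [hRdef, smul_mul_assoc, sub_mul, one_mul, smul_sub]
    have hSA' : S - lam⁻¹ • (S * T) = 1 - P := by
      have : S * (1 - K) = S - lam⁻¹ • (S * T) := by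
        rw [hKdef, mul_sub, mul_one, mul_smul_comm]
      rw [← this, hSA]
    have : lam • R - lam⁻¹ • T - R.comp T
        = (S - lam⁻¹ • (S * T)) - 1 := by
      rw [hlamR, hcomp, hRT']
      abel
    rw [this, hSA']
    abel
  have hmem : (-P : X →L[𝕜] X) ∈
      {G : X →L[𝕜] X | FiniteDimensional 𝕜 (LinearMap.range (G : X →ₗ[𝕜] X))} := by
    show FiniteDimensional 𝕜 (LinearMap.range ((-P : X →L[𝕜] X) : X →ₗ[𝕜] X))
    have : ((-P : X →L[𝕜] X) : X →ₗ[𝕜] X) = -(P : X →ₗ[𝕜] X) := rfl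
    rw [this, LinearMap.range_neg]
    exact hPfin
  exact ⟨R, hRc, hTR ▸ subset_closure hmem, hRT ▸ subset_closure hmem⟩
end

section
/- Let I be a Banach operator ideal with I contained in the compact operators, and let X be a Banach space. Then the quotient algebra A_X^I = I(X)/cl_I(F(X)) has no unit element (where cl_I denotes closure in the ideal norm), provided cl_I(F(X)) ≠ I(X). -/
/-- The component on a single Banach space `X` of a Banach operator ideal
`I = (I, ‖·‖_I)` in the sense of Pietsch: a set of operators `mem = I(X)` together with an
ideal norm `n = ‖·‖_I` satisfying (BOI1)–(BOI3) (restricted to the component on `X`). -/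
structure IdealOn (𝕜 : Type*) [RCLike 𝕜] (X : Type*) [NormedAddCommGroup X]
    [NormedSpace 𝕜 X] where
  mem : Set (X →L[𝕜] X)
  n : (X →L[𝕜] X) → ℝ
  finrank_mem : ∀ F : X →L[𝕜] X,
    FiniteDimensional 𝕜 (LinearMap.range (F : X →ₗ[𝕜] X)) → F ∈ mem
  add_mem : ∀ {S T : X →L[𝕜] X}, S ∈ mem → T ∈ mem → S + T ∈ mem
  neg_mem : ∀ {T : X →L[𝕜] X}, T ∈ mem → -T ∈ mem
  smul_mem : ∀ (c : 𝕜) {T : X →L[𝕜] X}, T ∈ mem → c • T ∈ mem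
  comp_mem_left : ∀ (B : X →L[𝕜] X) {T : X →L[𝕜] X}, T ∈ mem → B.comp T ∈ mem
  comp_mem_right : ∀ (B : X →L[𝕜] X) {T : X →L[𝕜] X}, T ∈ mem → T.comp B ∈ mem
  n_comp_left : ∀ (B : X →L[𝕜] X) {T : X →L[𝕜] X}, T ∈ mem → n (B.comp T) ≤ ‖B‖ * n T
  n_comp_right : ∀ (B : X →L[𝕜] X) {T : X →L[𝕜] X}, T ∈ mem → n (T.comp B) ≤ n T * ‖B‖
  opNorm_le_n : ∀ {T : X →L[𝕜] X}, T ∈ mem → ‖T‖ ≤ n T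
  n_nonneg : ∀ T : X →L[𝕜] X, 0 ≤ n T
  n_zero : n 0 = 0
  n_add_le : ∀ S T : X →L[𝕜] X, n (S + T) ≤ n S + n T
  n_neg : ∀ T : X →L[𝕜] X, n (-T) = n T
  n_smul : ∀ (c : 𝕜) (T : X →L[𝕜] X), n (c • T) = ‖c‖ * n T

/-- The approximative kernel on `X`: the `‖·‖_I`-closure of the finite-rank operators
inside `I(X)`.  This is the kernel of the quotient map `q : I(X) → 𝔄_X^I`. -/
def IdealOn.apx {𝕜 : Type*} [RCLike 𝕜] {X : Type*} [NormedAddCommGroup X]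
    [NormedSpace 𝕜 X] (I : IdealOn 𝕜 X) : Set (X →L[𝕜] X) :=
  {T | T ∈ I.mem ∧ ∀ ε : ℝ, 0 < ε → ∃ G : X →L[𝕜] X,
    FiniteDimensional 𝕜 (LinearMap.range (G : X →ₗ[𝕜] X)) ∧ I.n (T - G) < ε}

section Aux

open Submodule Metric Set Filter Topology

variable {𝕜 X : Type*} [RCLike 𝕜] [NormedAddCommGroup X] [NormedSpace 𝕜 X]

namespace IdealOn

variable (I : IdealOn 𝕜 X)

lemma sub_mem {S T : X →L[𝕜] X} (hS : S ∈ I.mem) (hT : T ∈ I.mem) : S - T ∈ I.mem := by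
  rw [sub_eq_add_neg]; exact I.add_mem hS (I.neg_mem hT)

lemma apx_of_finrank {G : X →L[𝕜] X}
    (hG : FiniteDimensional 𝕜 (LinearMap.range (G : X →ₗ[𝕜] X))) : G ∈ I.apx :=
  ⟨I.finrank_mem G hG, fun ε hε => ⟨G, hG, by rw [sub_self, I.n_zero]; exact hε⟩⟩

lemma apx_neg {S : X →L[𝕜] X} (hS : S ∈ I.apx) : -S ∈ I.apx := by
  refine ⟨I.neg_mem hS.1, fun ε hε => ?_⟩
  obtain ⟨G, hG, hn⟩ := hS.2 ε hε
  refine ⟨-G, ?_, ?_⟩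
  · have h : LinearMap.range ((-G : X →L[𝕜] X) : X →ₗ[𝕜] X)
        = LinearMap.range (G : X →ₗ[𝕜] X) := by
      ext y; constructor
      · rintro ⟨x, rfl⟩; exact ⟨-x, by simp⟩
      · rintro ⟨x, rfl⟩; exact ⟨-x, by simp⟩
    rw [h]; exact hG
  · have h : -S - -G = -(S - G) := by abel
    rw [h, I.n_neg]; exact hn

lemma apx_add {S T : X →L[𝕜] X} (hS : S ∈ I.apx) (hT : T ∈ I.apx) : S + T ∈ I.apx := by
  refine ⟨I.add_mem hS.1 hT.1, fun ε hε => ?_⟩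
  obtain ⟨G, hG, hnG⟩ := hS.2 (ε / 2) (by linarith)
  obtain ⟨H, hH, hnH⟩ := hT.2 (ε / 2) (by linarith)
  refine ⟨G + H, ?_, ?_⟩
  · have hle : LinearMap.range ((G + H : X →L[𝕜] X) : X →ₗ[𝕜] X)
        ≤ LinearMap.range (G : X →ₗ[𝕜] X) ⊔ LinearMap.range (H : X →ₗ[𝕜] X) := by
      rintro y ⟨x, rfl⟩
      exact Submodule.mem_sup.2 ⟨G x, ⟨x, rfl⟩, H x, ⟨x, rfl⟩, rfl⟩
    exact Submodule.finiteDimensional_of_le hle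
  · have h : S + T - (G + H) = S - G + (T - H) := by abel
    rw [h]
    calc I.n (S - G + (T - H)) ≤ I.n (S - G) + I.n (T - H) := I.n_add_le _ _
      _ < ε := by linarith

lemma apx_comp_left (B : X →L[𝕜] X) {S : X →L[𝕜] X} (hS : S ∈ I.apx) :
    B.comp S ∈ I.apx := by
  refine ⟨I.comp_mem_left B hS.1, fun ε hε => ?_⟩
  have hB1 : (0:ℝ) < ‖B‖ + 1 := by positivity
  obtain ⟨G, hG, hn⟩ := hS.2 (ε / (‖B‖ + 1)) (by positivity)
  refine ⟨B.comp G, ?_, ?_⟩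
  · rw [ContinuousLinearMap.toLinearMap_comp, LinearMap.range_comp]
    infer_instance
  · have hsub : B.comp S - B.comp G = B.comp (S - G) := by
      rw [ContinuousLinearMap.comp_sub]
    have hmem : S - G ∈ I.mem := I.sub_mem hS.1 (I.finrank_mem G hG)
    rw [hsub]
    calc I.n (B.comp (S - G)) ≤ ‖B‖ * I.n (S - G) := I.n_comp_left B hmem
      _ ≤ ‖B‖ * (ε / (‖B‖ + 1)) := by
          exact mul_le_mul_of_nonneg_left hn.le (norm_nonneg B)
      _ < (‖B‖ + 1) * (ε / (‖B‖ + 1)) := by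
          apply mul_lt_mul_of_pos_right (by linarith) (by positivity)
      _ = ε := by field_simp

end IdealOn

set_option maxHeartbeats 1000000 in
/-- The key Riesz–Fredholm fact: for a compact operator `U` on a Banach space,
`1 - U` has a left regularizer: `V ∘ (1 - U) = 1 - Pn` with `Pn` of finite rank. -/
lemma exists_left_regularizer [CompleteSpace 𝕜] [CompleteSpace X] (U : X →L[𝕜] X)
    (hU : IsCompactOperator U) :
    ∃ (V Pn : X →L[𝕜] X), FiniteDimensional 𝕜 (LinearMap.range (Pn : X →ₗ[𝕜] X)) ∧
      ∀ x : X, V (x - U x) = x - Pn x := by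
  classical
  have hK : IsCompact (closure (U '' closedBall 0 1)) :=
    hU.isCompact_closure_image_closedBall (𝕜₁ := 𝕜) 1
  set K := closure (U '' closedBall 0 1) with hKdef
  have hUK : ∀ x : X, ‖x‖ ≤ 1 → U x ∈ K := fun x hx =>
    subset_closure ⟨x, by simpa [mem_closedBall, dist_zero_right] using hx, rfl⟩
  set L : X →L[𝕜] X := ContinuousLinearMap.id 𝕜 X - U with hLdef
  have hLx : ∀ x, L x = x - U x := fun x => rfl
  set N := LinearMap.ker (L : X →ₗ[𝕜] X) with hNdef
  -- N is finite dimensional (Riesz)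
  haveI hNfin : FiniteDimensional 𝕜 N := by
    apply FiniteDimensional.of_isCompact_closedBall₀ 𝕜 one_pos (r := 1)
    rw [Topology.IsEmbedding.isCompact_iff (Topology.IsEmbedding.subtypeVal (p := fun x => x ∈ N))]
    have himg : Subtype.val '' closedBall (0 : N) 1 = (N : Set X) ∩ closedBall 0 1 := by
      ext x
      constructor
      · rintro ⟨y, hy, rfl⟩
        exact ⟨y.2, by simpa [mem_closedBall, dist_zero_right] using hy⟩
      · rintro ⟨hxN, hx⟩
        refine ⟨⟨x, hxN⟩, ?_, rfl⟩
        simpa [mem_closedBall, dist_zero_right] using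
          (by simpa [mem_closedBall, dist_zero_right] using hx : ‖x‖ ≤ 1)
    rw [himg]
    apply hK.of_isClosed_subset
      ((ContinuousLinearMap.isClosed_ker L).inter isClosed_closedBall)
    rintro x ⟨hxN, hx⟩
    have hx1 : ‖x‖ ≤ 1 := by simpa [mem_closedBall, dist_zero_right] using hx
    have hxU : x = U x := by
      have : L x = 0 := hxN
      rw [hLx] at this
      exact (sub_eq_zero.mp this)
    rw [hxU]
    exact hUK x hx1
  -- projection onto N
  obtain ⟨P, hP⟩ := Submodule.ClosedComplemented.of_finiteDimensional N
  set Pn : X →L[𝕜] X := N.subtypeL.comp P with hPndef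
  have hPn_mem : ∀ x, Pn x ∈ N := fun x => (P x).2
  have hPn_id : ∀ x, x ∈ N → Pn x = x := fun x hx => by
    have := hP ⟨x, hx⟩
    simpa [hPndef] using congrArg Subtype.val this
  set M := LinearMap.ker (Pn : X →ₗ[𝕜] X) with hMdef
  have hM_closed : IsClosed (M : Set X) := ContinuousLinearMap.isClosed_ker Pn
  have hQmem : ∀ x, x - Pn x ∈ M := by
    intro x
    have : Pn (x - Pn x) = 0 := by
      rw [map_sub, hPn_id _ (hPn_mem x), sub_self]
    exact LinearMap.mem_ker.2 this
  have hNM : ∀ x, x ∈ N → x ∈ M → x = 0 := by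
    intro x hxN hxM
    have h1 : Pn x = x := hPn_id x hxN
    have h2 : Pn x = 0 := LinearMap.mem_ker.1 hxM
    rw [h2] at h1; exact h1.symm
  have hLPn : ∀ x, L (Pn x) = 0 := fun x => LinearMap.mem_ker.1 (hPn_mem x)
  -- L is bounded below on M
  have hbb : ∃ c : ℝ, 0 < c ∧ ∀ x ∈ M, c * ‖x‖ ≤ ‖L x‖ := by
    by_contra hcon
    push_neg at hcon
    have hseq : ∀ k : ℕ, ∃ u : X, u ∈ M ∧ ‖u‖ = 1 ∧ ‖L u‖ < 1 / (k + 1) := by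
      intro k
      obtain ⟨x, hxM, hx⟩ := hcon (1 / (k + 1)) (by positivity)
      have hx0 : x ≠ 0 := by rintro rfl; simp at hx
      have hxn : (0:ℝ) < ‖x‖ := norm_pos_iff.2 hx0
      have hns : ‖((‖x‖ : 𝕜))⁻¹‖ = ‖x‖⁻¹ := by
        rw [norm_inv, RCLike.norm_ofReal, abs_of_nonneg (norm_nonneg x)]
      refine ⟨((‖x‖ : 𝕜))⁻¹ • x, M.smul_mem _ hxM, ?_, ?_⟩
      · rw [norm_smul, hns, inv_mul_cancel₀ hxn.ne']
      · rw [map_smul, norm_smul, hns]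
        calc ‖x‖⁻¹ * ‖L x‖ < ‖x‖⁻¹ * (1 / (k + 1) * ‖x‖) := by
              exact mul_lt_mul_of_pos_left hx (by positivity)
          _ = 1 / (k + 1) := by field_simp
    choose u huM hu1 huL using hseq
    have hUu : ∀ k, U (u k) ∈ K := fun k => hUK _ (hu1 k).le
    obtain ⟨z, hzK, φ, hφ, hz⟩ := hK.tendsto_subseq hUu
    have hLto : Tendsto (fun k => L (u (φ k))) atTop (𝓝 0) := by
      apply squeeze_zero_norm (fun k => ?_) tendsto_one_div_add_atTop_nhds_zero_nat
      have h1 : ‖L (u (φ k))‖ < 1 / (φ k + 1) := huL (φ k)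
      have h2 : (1:ℝ) / (φ k + 1) ≤ 1 / (k + 1) := by
        apply one_div_le_one_div_of_le (by positivity)
        have hk : (k : ℕ) ≤ φ k := hφ.le_apply
        exact_mod_cast Nat.add_le_add_right hk 1
      linarith
    have huto : Tendsto (fun k => u (φ k)) atTop (𝓝 z) := by
      have heq : (fun k => u (φ k)) = fun k => L (u (φ k)) + U (u (φ k)) := by
        funext k; rw [hLx]; abel
      rw [heq]
      have hz' : Tendsto (fun k => U (u (φ k))) atTop (𝓝 z) := hz
      simpa using hLto.add hz'
    have hzM : z ∈ M := hM_closed.mem_of_tendsto huto (Eventually.of_forall fun k => huM _)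
    have hz1 : ‖z‖ = 1 := by
      have h1 : Tendsto (fun k => ‖u (φ k)‖) atTop (𝓝 ‖z‖) := huto.norm
      have h2 : Tendsto (fun k => ‖u (φ k)‖) atTop (𝓝 1) := by
        simp only [hu1]
        exact tendsto_const_nhds
      exact tendsto_nhds_unique h1 h2
    have hzN : z ∈ N := by
      have h2 : Tendsto (fun k => L (u (φ k))) atTop (𝓝 (L z)) :=
        (L.continuous.tendsto z).comp huto
      exact LinearMap.mem_ker.2 (tendsto_nhds_unique h2 hLto)
    have := hNM z hzN hzM
    rw [this, norm_zero] at hz1; norm_num at hz1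
  obtain ⟨c, hc0, hc⟩ := hbb
  -- the restriction of L to M
  set f : M →L[𝕜] X := L.comp M.subtypeL with hfdef
  have hf_apply : ∀ m : M, f m = L (m : X) := fun m => rfl
  have hf_low : ∀ m : M, c * ‖m‖ ≤ ‖f m‖ := fun m => hc (m : X) m.2
  have hfinj : Function.Injective (f : M →ₗ[𝕜] X) := by
    intro a b hab
    have hfab : f (a - b) = 0 := by
      have : f a = f b := hab
      rw [map_sub, this, sub_self]
    have h2 := hf_low (a - b)
    rw [hfab, norm_zero] at h2
    have h3 : ‖a - b‖ ≤ 0 := by nlinarith [norm_nonneg (a - b)]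
    have : a - b = 0 := by
      rwa [← norm_le_zero_iff]
    exact sub_eq_zero.mp this
  set R := LinearMap.range (f : M →ₗ[𝕜] X) with hRdef
  have hLR : ∀ x, L x ∈ R := by
    intro x
    refine ⟨⟨x - Pn x, hQmem x⟩, ?_⟩
    show f ⟨x - Pn x, hQmem x⟩ = L x
    rw [hf_apply, map_sub, hLPn, sub_zero]
  have hR_closed : IsClosed (R : Set X) := by
    haveI : CompleteSpace M := hM_closed.completeSpace_coe
    have hal : AntilipschitzWith (c⁻¹).toNNReal f := by
      apply ContinuousLinearMap.antilipschitz_of_bound f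
      intro m
      rw [Real.coe_toNNReal _ (inv_nonneg.2 hc0.le), le_inv_mul_iff₀ hc0]
      exact hf_low m
    have h1 := hal.isClosed_range f.uniformContinuous
    have h2 : (R : Set X) = Set.range f := by
      rw [hRdef]
      simp [LinearMap.coe_range]
    rwa [h2]
  -- finite codimension of R, via a compactness net argument
  obtain ⟨s, hsfin, hsnet⟩ := (Metric.totallyBounded_iff).mp hK.totallyBounded
    (1 / 4) (by norm_num)
  have hmkQcont : Continuous R.mkQ :=
    AddMonoidHomClass.continuous_of_bound R.mkQ 1 fun x => by
      simpa using Submodule.Quotient.norm_mk_le R x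
  have hmapfin : FiniteDimensional 𝕜 (Submodule.map R.mkQ (R ⊔ span 𝕜 s)) := by
    rw [Submodule.map_sup, Submodule.map_span, Submodule.mkQ_map_self, bot_sup_eq]
    exact FiniteDimensional.span_of_finite _ (hsfin.image _)
  have hW : R ⊔ span 𝕜 s = ⊤ := by
    by_contra hWne
    have hWclosed : IsClosed ((R ⊔ span 𝕜 s : Submodule 𝕜 X) : Set X) := by
      haveI := hR_closed
      have key : ((R ⊔ span 𝕜 s : Submodule 𝕜 X) : Set X)
          = R.mkQ ⁻¹' ((Submodule.map R.mkQ (R ⊔ span 𝕜 s)) : Set (X ⧸ R)) := by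
        have h1 : Submodule.comap R.mkQ (Submodule.map R.mkQ (R ⊔ span 𝕜 s))
            = R ⊔ span 𝕜 s := by
          rw [Submodule.comap_map_mkQ, ← sup_assoc, sup_idem]
        ext x
        simp only [SetLike.mem_coe, Set.mem_preimage]
        constructor
        · intro hx; exact Submodule.mem_map_of_mem hx
        · intro hx
          have : x ∈ Submodule.comap R.mkQ (Submodule.map R.mkQ (R ⊔ span 𝕜 s)) :=
            Submodule.mem_comap.2 hx
          rwa [h1] at this
      rw [key]
      exact IsClosed.preimage hmkQcont
        (Submodule.closed_of_finiteDimensional _)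
    obtain ⟨x₀, hx₀⟩ : ∃ x, x ∉ (R ⊔ span 𝕜 s) := by
      by_contra h; push_neg at h; exact hWne (Submodule.eq_top_iff'.mpr h)
    obtain ⟨x₁, hx₁W, hx₁⟩ := riesz_lemma hWclosed ⟨x₀, hx₀⟩ (r := 1 / 2) (by norm_num)
    have hx₁0 : x₁ ≠ 0 := fun h => hx₁W (h ▸ Submodule.zero_mem _)
    have hx₁n : (0:ℝ) < ‖x₁‖ := norm_pos_iff.2 hx₁0
    have hks : ((‖x₁‖ : 𝕜)) ≠ 0 := by
      rw [ne_eq, RCLike.ofReal_eq_zero]; exact hx₁n.ne'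
    have hns : ‖((‖x₁‖ : 𝕜))⁻¹‖ = ‖x₁‖⁻¹ := by
      rw [norm_inv, RCLike.norm_ofReal, abs_of_nonneg (norm_nonneg x₁)]
    set v := ((‖x₁‖ : 𝕜))⁻¹ • x₁ with hvdef
    have hv1 : ‖v‖ = 1 := by
      rw [hvdef, norm_smul, hns, inv_mul_cancel₀ hx₁n.ne']
    have hv : ∀ y ∈ (R ⊔ span 𝕜 s : Submodule 𝕜 X), (1:ℝ) / 2 ≤ ‖v - y‖ := by
      intro y hy
      have h1 := hx₁ (((‖x₁‖ : 𝕜)) • y) (Submodule.smul_mem _ _ hy)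
      have h2 : v - y = ((‖x₁‖ : 𝕜))⁻¹ • (x₁ - ((‖x₁‖ : 𝕜)) • y) := by
        rw [smul_sub, hvdef, smul_smul, inv_mul_cancel₀ hks, one_smul]
      rw [h2, norm_smul, hns, le_inv_mul_iff₀ hx₁n]
      linarith
    have hUv : U v ∈ K := hUK v hv1.le
    have hcover := hsnet hUv
    simp only [Set.mem_iUnion] at hcover
    obtain ⟨y, hys, hy⟩ := hcover
    have hmem : L v + y ∈ (R ⊔ span 𝕜 s : Submodule 𝕜 X) :=
      Submodule.add_mem _ ((le_sup_left : R ≤ _) (hLR v))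
        ((le_sup_right : span 𝕜 s ≤ _) (Submodule.subset_span hys))
    have h1 := hv _ hmem
    have h2 : v - (L v + y) = U v - y := by rw [hLx]; abel
    rw [h2] at h1
    have h3 : ‖U v - y‖ < 1 / 4 := by
      rw [mem_ball, dist_eq_norm] at hy; exact hy
    linarith
  haveI hQfin : FiniteDimensional 𝕜 (X ⧸ R) := by
    have h2 : (⊤ : Submodule 𝕜 (X ⧸ R)) = Submodule.map R.mkQ (R ⊔ span 𝕜 s) := by
      rw [hW, Submodule.map_top, Submodule.range_mkQ]
    haveI : FiniteDimensional 𝕜 (⊤ : Submodule 𝕜 (X ⧸ R)) := by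
      rw [h2]; exact hmapfin
    exact Submodule.topEquiv.finiteDimensional
  obtain ⟨π, hπ⟩ := Submodule.ClosedComplemented.of_quotient_finiteDimensional hR_closed
  -- the continuous inverse of f : M ≃ R
  set e := LinearEquiv.ofInjective (f : M →ₗ[𝕜] X) hfinj with hedef
  have hfe : ∀ r : R, f (e.symm r) = (r : X) := by
    intro r
    have h1 : ((e (e.symm r) : R) : X) = f (e.symm r) :=
      LinearEquiv.ofInjective_apply (f : M →ₗ[𝕜] X) (e.symm r)
    rw [LinearEquiv.apply_symm_apply] at h1
    exact h1.symm
  have hg0bound : ∀ r : R, ‖((e.symm r : M) : X)‖ ≤ c⁻¹ * ‖r‖ := by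
    intro r
    have h1 := hf_low (e.symm r)
    rw [hfe r] at h1
    rw [le_inv_mul_iff₀ hc0]
    exact h1
  set g₀ : R →ₗ[𝕜] X := M.subtype.comp e.symm.toLinearMap with hg₀def
  have hg₀ : ∀ r : R, g₀ r = ((e.symm r : M) : X) := fun r => rfl
  set g : R →L[𝕜] X := g₀.mkContinuous c⁻¹ (fun r => by rw [hg₀]; exact hg0bound r)
    with hgdef
  have hgapp : ∀ r : R, g r = ((e.symm r : M) : X) := fun r => rfl
  set V : X →L[𝕜] X := g.comp π with hVdef
  refine ⟨V, Pn, ?_, ?_⟩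
  · have hle : LinearMap.range ((Pn : X →L[𝕜] X) : X →ₗ[𝕜] X) ≤ N := by
      rintro y ⟨x, rfl⟩; exact hPn_mem x
    exact Submodule.finiteDimensional_of_le hle
  · intro x
    have hx1 : (⟨L x, hLR x⟩ : R) = e ⟨x - Pn x, hQmem x⟩ := by
      apply Subtype.ext
      have h1 : ((e ⟨x - Pn x, hQmem x⟩ : R) : X) = f ⟨x - Pn x, hQmem x⟩ :=
        LinearEquiv.ofInjective_apply (f : M →ₗ[𝕜] X) _
      rw [h1, hf_apply, map_sub, hLPn, sub_zero]
    have hπx : π (L x) = ⟨L x, hLR x⟩ := hπ ⟨L x, hLR x⟩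
    calc V (x - U x) = g (π (L x)) := by rw [← hLx x]; rfl
      _ = g (e ⟨x - Pn x, hQmem x⟩) := by rw [hπx, hx1]
      _ = ((e.symm (e ⟨x - Pn x, hQmem x⟩) : M) : X) := hgapp _
      _ = x - Pn x := by rw [LinearEquiv.symm_apply_apply]

end Aux

/-- If `I ⊆ K` is a Banach operator ideal contained in the compact operators and
`cl_I(F(X)) ≠ I(X)`, then the quotient algebra `𝔄_X^I = I(X)/cl_I(F(X))` has no unit element:
there is no `U ∈ I(X)` whose coset satisfies `[U]·[T] = [T] = [T]·[U]` for all `T ∈ I(X)`,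
i.e. `U∘T - T ∈ cl_I(F(X))` and `T∘U - T ∈ cl_I(F(X))` for all `T ∈ I(X)`. -/
theorem stmt_6 {𝕜 X : Type*} [RCLike 𝕜] [NormedAddCommGroup X] [NormedSpace 𝕜 X]
    [CompleteSpace X] (I : IdealOn 𝕜 X)
    (hcpt : ∀ T ∈ I.mem, IsCompactOperator T)
    (hproper : I.apx ≠ I.mem) :
    ¬ ∃ U ∈ I.mem, ∀ T ∈ I.mem, U.comp T - T ∈ I.apx ∧ T.comp U - T ∈ I.apx := by
  rintro ⟨U, hU, hunit⟩
  apply hproper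
  apply Set.Subset.antisymm (fun T hT => hT.1)
  intro T hT
  obtain ⟨V, Pn, hPnfin, hV⟩ := exists_left_regularizer U (hcpt U hU)
  have h1 : U.comp T - T ∈ I.apx := (hunit T hT).1
  have h2 : -(U.comp T - T) ∈ I.apx := I.apx_neg h1
  have h3 : V.comp (-(U.comp T - T)) ∈ I.apx := I.apx_comp_left V h2
  have h4 : Pn.comp T ∈ I.apx := by
    apply I.apx_of_finrank
    haveI := hPnfin
    have hle : LinearMap.range ((Pn.comp T : X →L[𝕜] X) : X →ₗ[𝕜] X)
        ≤ LinearMap.range (Pn : X →ₗ[𝕜] X) := by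
      rw [ContinuousLinearMap.toLinearMap_comp]
      exact LinearMap.range_comp_le_range _ _
    exact Submodule.finiteDimensional_of_le hle
  have h5 : T = V.comp (-(U.comp T - T)) + Pn.comp T := by
    ext x
    have := hV (T x)
    simp only [ContinuousLinearMap.add_apply, ContinuousLinearMap.comp_apply,
      ContinuousLinearMap.neg_apply, ContinuousLinearMap.sub_apply]
    rw [show -(U (T x) - T x) = T x - U (T x) by abel, this]
    abel
  rw [h5]
  exact I.apx_add h3 h4
end

section
/- Let I be a Banach operator ideal, X a Banach space, and let J₁, J₂ be nonzero closed two-sided ideals of I(X). Then J₁ ⊆ J₂ if and only if q(J₁) ⊆ q(J₂), where q is the quotient map onto I(X)/cl_I(F(X)). Consequently J ↦ q(J) is a bijection from the set of nonzero closed ideals of I(X) onto the set of closed ideals of the quotient, preserving inclusions in both directions. -/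
/-- **Proposition 5.2.(iii).** Let `I` be a Banach operator ideal, `X` a Banach space and
`q : I(X) → I(X)/cl_I(F(X))` the quotient map.  If `J₁, J₂` are nonzero `‖·‖_I`-closed
two-sided ideals of `I(X)`, then `J₁ ⊆ J₂` if and only if `q(J₁) ⊆ q(J₂)` (the latter stated
explicitly: every `T ∈ J₁` differs from some `S ∈ J₂` by an element of `cl_I(F(X))`).
Consequently `J ↦ q(J)` is a bijective correspondence between nonzero closed ideals of `I(X)`
and closed ideals of the quotient, preserving inclusions in both directions. -/
theorem stmt_8 {𝕜 X : Type*} [RCLike 𝕜] [NormedAddCommGroup X] [NormedSpace 𝕜 X]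
    [CompleteSpace X] [Nontrivial X] (I : IdealOn 𝕜 X) (J₁ J₂ : Set (X →L[𝕜] X))
    (hJI₁ : J₁ ⊆ I.mem) (hJI₂ : J₂ ⊆ I.mem)
    (hadd₁ : ∀ {S T : X →L[𝕜] X}, S ∈ J₁ → T ∈ J₁ → S + T ∈ J₁)
    (hadd₂ : ∀ {S T : X →L[𝕜] X}, S ∈ J₂ → T ∈ J₂ → S + T ∈ J₂)
    (hneg₁ : ∀ {T : X →L[𝕜] X}, T ∈ J₁ → -T ∈ J₁)
    (hneg₂ : ∀ {T : X →L[𝕜] X}, T ∈ J₂ → -T ∈ J₂)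
    (hsmul₁ : ∀ (c : 𝕜) {T : X →L[𝕜] X}, T ∈ J₁ → c • T ∈ J₁)
    (hsmul₂ : ∀ (c : 𝕜) {T : X →L[𝕜] X}, T ∈ J₂ → c • T ∈ J₂)
    (hmulL₁ : ∀ {B T : X →L[𝕜] X}, B ∈ I.mem → T ∈ J₁ → B.comp T ∈ J₁)
    (hmulL₂ : ∀ {B T : X →L[𝕜] X}, B ∈ I.mem → T ∈ J₂ → B.comp T ∈ J₂)
    (hmulR₁ : ∀ {B T : X →L[𝕜] X}, B ∈ I.mem → T ∈ J₁ → T.comp B ∈ J₁)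
    (hmulR₂ : ∀ {B T : X →L[𝕜] X}, B ∈ I.mem → T ∈ J₂ → T.comp B ∈ J₂)
    (hclosed₁ : ∀ T ∈ I.mem, (∀ ε : ℝ, 0 < ε → ∃ S ∈ J₁, I.n (T - S) < ε) → T ∈ J₁)
    (hclosed₂ : ∀ T ∈ I.mem, (∀ ε : ℝ, 0 < ε → ∃ S ∈ J₂, I.n (T - S) < ε) → T ∈ J₂)
    (hne₁ : ∃ T ∈ J₁, T ≠ 0) (hne₂ : ∃ T ∈ J₂, T ≠ 0) :
    J₁ ⊆ J₂ ↔ ∀ T ∈ J₁, ∃ S ∈ J₂, T - S ∈ I.apx := by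
  constructor
  · intro hsub T hT
    refine ⟨T, hsub hT, ?_⟩
    simp only [sub_self]
    have h0fd : FiniteDimensional 𝕜 (LinearMap.range ((0 : X →L[𝕜] X) : X →ₗ[𝕜] X)) := by
      rw [show ((0 : X →L[𝕜] X) : X →ₗ[𝕜] X) = 0 from rfl, LinearMap.range_zero]
      infer_instance
    refine ⟨I.finrank_mem 0 h0fd, ?_⟩
    intro ε hε
    exact ⟨0, h0fd, by simpa [I.n_zero] using hε⟩
  · intro h T hT
    obtain ⟨T₂, hT₂, hT₂ne⟩ := hne₂
    have h0 : (0 : X →L[𝕜] X) ∈ J₂ := by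
      have := hadd₂ hT₂ (hneg₂ hT₂)
      simpa using this
    obtain ⟨x₀, hx₀⟩ : ∃ x, T₂ x ≠ 0 := by
      by_contra hc
      push_neg at hc
      exact hT₂ne (ContinuousLinearMap.ext fun x => by simp [hc x])
    obtain ⟨g, hg1, hg2⟩ := exists_dual_vector 𝕜 (T₂ x₀) (norm_ne_zero_iff.mpr hx₀)
    set g' : X →L[𝕜] 𝕜 := ((‖T₂ x₀‖ : 𝕜))⁻¹ • g with hg'
    have hg'val : g' (T₂ x₀) = 1 := by
      have hn : (‖T₂ x₀‖ : 𝕜) ≠ 0 := by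
        simpa using norm_ne_zero_iff.mpr hx₀
      simp [hg', hg2, inv_mul_cancel₀ hn]
    -- rank-one operators have finite-dimensional range
    have hfr : ∀ (f : X →L[𝕜] 𝕜) (y : X),
        FiniteDimensional 𝕜 (LinearMap.range ((f.smulRight y : X →L[𝕜] X) : X →ₗ[𝕜] X)) := by
      intro f y
      have hle : LinearMap.range ((f.smulRight y : X →L[𝕜] X) : X →ₗ[𝕜] X)
          ≤ Submodule.span 𝕜 {y} := by
        rintro z ⟨x, rfl⟩
        exact Submodule.smul_mem _ _ (Submodule.mem_span_singleton_self y)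
      exact Submodule.finiteDimensional_of_le hle
    -- every rank-one operator lies in J₂
    have hrank1 : ∀ (f : X →L[𝕜] 𝕜) (y : X), (f.smulRight y : X →L[𝕜] X) ∈ J₂ := by
      intro f y
      have hA : (f.smulRight x₀ : X →L[𝕜] X) ∈ I.mem := I.finrank_mem _ (hfr f x₀)
      have hB : (g'.smulRight y : X →L[𝕜] X) ∈ I.mem := I.finrank_mem _ (hfr g' y)
      have key : (f.smulRight y : X →L[𝕜] X)
          = (g'.smulRight y).comp (T₂.comp (f.smulRight x₀)) := by
        ext x
        simp [ContinuousLinearMap.smulRight_apply, map_smul, smul_smul, hg'val,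
          mul_comm]
      rw [key]
      exact hmulL₂ hB (hmulR₂ hA hT₂)
    -- every finite-rank operator lies in J₂
    have hfin : ∀ G : X →L[𝕜] X,
        FiniteDimensional 𝕜 (LinearMap.range (G : X →ₗ[𝕜] X)) → G ∈ J₂ := by
      intro G hG
      set V := LinearMap.range (G : X →ₗ[𝕜] X) with hV
      haveI : FiniteDimensional 𝕜 V := hG
      let b := Module.finBasis 𝕜 V
      let G' : X →L[𝕜] V := G.codRestrict V (fun x => LinearMap.mem_range_self _ x)
      have hdecomp : G = ∑ i, ((LinearMap.toContinuousLinearMap (b.coord i)).comp G').smulRight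
          ((b i : V) : X) := by
        ext x
        have := congrArg (Subtype.val : V → X) (b.sum_repr (G' x))
        simp only [Submodule.coe_sum, Submodule.coe_smul] at this
        simpa [ContinuousLinearMap.sum_apply, ContinuousLinearMap.smulRight_apply,
          Module.Basis.coord_apply, G'] using this.symm
      rw [hdecomp]
      exact Finset.sum_induction _ (· ∈ J₂) (fun _ _ ha hb => hadd₂ ha hb) h0
        (fun i _ => hrank1 _ _)
    obtain ⟨S, hS, hTS⟩ := h T hT
    have hTSJ : T - S ∈ J₂ := by
      refine hclosed₂ _ hTS.1 ?_
      intro ε hε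
      obtain ⟨G, hGfr, hGn⟩ := hTS.2 ε hε
      exact ⟨G, hfin G hGfr, hGn⟩
    have := hadd₂ hS hTSJ
    simpa using this
end

section
/- Let X be a Banach space and I ⊆ K a Banach operator ideal, with quotient algebra A = I(X)/cl_I(F(X)). If U ∈ I(X) and the coset of U is a unit element of A, then one derives a contradiction: invertibility of 1 − [U] in the unitisation forces U ∈ cl_I(F(X)). Hence A has no unit element. -/
open Metric Filter

set_option linter.unusedSectionVars false
set_option maxHeartbeats 1000000

section RieszTheory

variable {𝕜 X : Type*} [RCLike 𝕜] [NormedAddCommGroup X] [NormedSpace 𝕜 X] [CompleteSpace X]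

lemma aux_isClosed_sup (q W : Submodule 𝕜 X) (hq : IsClosed (q : Set X))
    [FiniteDimensional 𝕜 W] : IsClosed ((q ⊔ W : Submodule 𝕜 X) : Set X) := by
  haveI := hq
  letI : NormedAddCommGroup (X ⧸ q) := Submodule.Quotient.normedAddCommGroup q
  letI : NormedSpace 𝕜 (X ⧸ q) := Submodule.Quotient.normedSpace q 𝕜
  have hcont : Continuous q.mkQ := by
    refine AddMonoidHomClass.continuous_of_bound q.mkQ 1 fun x => ?_
    simpa using Submodule.Quotient.norm_mk_le q x
  have hWc : IsClosed ((W.map q.mkQ : Submodule 𝕜 (X ⧸ q)) : Set (X ⧸ q)) :=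
    Submodule.closed_of_finiteDimensional _
  have hset : ((q ⊔ W : Submodule 𝕜 X) : Set X) = q.mkQ ⁻¹' (W.map q.mkQ : Submodule 𝕜 (X ⧸ q)) := by
    ext x
    simp only [Set.mem_preimage, SetLike.mem_coe, Submodule.mem_map]
    constructor
    · intro hx
      obtain ⟨a, ha, w, hw, rfl⟩ := Submodule.mem_sup.mp hx
      exact ⟨w, hw, by simp [Submodule.Quotient.mk_add, (Submodule.Quotient.mk_eq_zero q).mpr ha,
        Submodule.mkQ_apply]⟩
    · rintro ⟨w, hw, hww⟩
      have : x - w ∈ q := by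
        rw [← Submodule.Quotient.mk_eq_zero q]
        have : q.mkQ (x - w) = 0 := by
          rw [map_sub, hww]; simp
        simpa [Submodule.mkQ_apply] using this
      have : x = (x - w) + w := by abel
      rw [this]
      exact Submodule.add_mem_sup ‹x - w ∈ q› hw
  rw [hset]
  exact hWc.preimage hcont

lemma aux_ker_findim (U : X →L[𝕜] X) (hU : IsCompactOperator U) :
    FiniteDimensional 𝕜 (LinearMap.ker ((1 - U : X →L[𝕜] X) : X →ₗ[𝕜] X)) := by
  obtain ⟨K, hK, hUK⟩ := hU.image_closedBall_subset_compact 1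
  set N := LinearMap.ker ((1 - U : X →L[𝕜] X) : X →ₗ[𝕜] X) with hN
  have hNc : IsClosed (N : Set X) := by
    have h : (N : Set X) = (1 - U : X →L[𝕜] X) ⁻¹' {0} := by
      ext x; simp [hN, LinearMap.mem_ker]
    rw [h]
    exact isClosed_singleton.preimage (1 - U : X →L[𝕜] X).continuous
  set s : Set X := (N : Set X) ∩ closedBall 0 1 with hs
  have hsc : IsCompact s := by
    refine hK.of_isClosed_subset (hNc.inter isClosed_closedBall) ?_
    rintro x ⟨hxN, hxB⟩
    have hx0 : x - U x = 0 := by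
      simpa [ContinuousLinearMap.sub_apply] using (LinearMap.mem_ker).mp hxN
    have hx : U x = x := by
      have := sub_eq_zero.mp hx0; exact this.symm
    have hm : U x ∈ K := hUK ⟨x, hxB, rfl⟩
    rwa [hx] at hm
  -- transfer to the subtype
  have hball : (Subtype.val : N → X) ⁻¹' s = closedBall (0 : N) 1 := by
    ext x
    simp [hs, dist_eq_norm, Submodule.coe_norm]
  have hemb : Topology.IsClosedEmbedding (Subtype.val : N → X) :=
    hNc.isClosedEmbedding_subtypeVal
  have hcpt : IsCompact (closedBall (0 : N) 1) := by
    rw [← hball]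
    exact hemb.isCompact_preimage hsc
  exact FiniteDimensional.of_isCompact_closedBall₀ 𝕜 one_pos hcpt

lemma aux_findim_quot (U : X →L[𝕜] X) (hU : IsCompactOperator U) (R : Submodule 𝕜 X)
    (hRc : IsClosed (R : Set X)) (hVR : ∀ x, x - U x ∈ R) :
    FiniteDimensional 𝕜 (X ⧸ R) := by
  by_contra hinf
  obtain ⟨K, hK, hUK⟩ := hU.image_closedBall_subset_compact 1
  set Inv : Submodule 𝕜 X → Prop := fun p =>
    IsClosed (p : Set X) ∧ R ≤ p ∧ ∃ W : Submodule 𝕜 X, FiniteDimensional 𝕜 W ∧ p = R ⊔ W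
    with hInv
  have hInvR : Inv R := ⟨hRc, le_rfl, ⊥, inferInstance, by simp⟩
  have hne : ∀ p, Inv p → ∃ v, v ∉ p := by
    intro p hp
    by_contra hcon
    push_neg at hcon
    obtain ⟨W, hWfd, hpRW⟩ := hp.2.2
    apply hinf
    have hsurj : Function.Surjective (R.mkQ.comp W.subtype) := by
      intro yq
      obtain ⟨x, rfl⟩ := R.mkQ_surjective yq
      have hx : x ∈ R ⊔ W := hpRW ▸ hcon x
      obtain ⟨a, ha, w, hw, rfl⟩ := Submodule.mem_sup.mp hx
      refine ⟨⟨w, hw⟩, ?_⟩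
      simp only [LinearMap.comp_apply, Submodule.subtype_apply, Submodule.mkQ_apply]
      rw [Submodule.Quotient.mk_add]
      rw [(Submodule.Quotient.mk_eq_zero R).mpr ha, zero_add]
    exact Module.Finite.of_surjective (R.mkQ.comp W.subtype) hsurj
  have hstep : ∀ p, Inv p → ∃ u : X, ‖u‖ = 1 ∧ ∀ y ∈ p, (1:ℝ)/2 ≤ ‖u - y‖ := by
    intro p hp
    obtain ⟨x₀, hx₀, hsep⟩ := riesz_lemma hp.1 (hne p hp) (r := 2/3) (by norm_num)
    have hx₀ne : x₀ ≠ 0 := fun h => hx₀ (h ▸ p.zero_mem)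
    have hr : (0:ℝ) < ‖x₀‖ := norm_pos_iff.mpr hx₀ne
    refine ⟨((‖x₀‖ : 𝕜))⁻¹ • x₀, ?_, ?_⟩
    · rw [norm_smul, norm_inv, RCLike.norm_ofReal, abs_of_nonneg (norm_nonneg _),
        inv_mul_cancel₀ hr.ne']
    · intro y hy
      have hyp : ((‖x₀‖ : 𝕜)) • y ∈ p := p.smul_mem _ hy
      have h1 : ((‖x₀‖ : 𝕜))⁻¹ • x₀ - y = ((‖x₀‖ : 𝕜))⁻¹ • (x₀ - (‖x₀‖ : 𝕜) • y) := by
        rw [smul_sub, smul_smul, inv_mul_cancel₀ (by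
          simpa using (RCLike.ofReal_ne_zero (K := 𝕜)).mpr hr.ne'), one_smul]
      rw [h1, norm_smul, norm_inv, RCLike.norm_ofReal, abs_of_nonneg (norm_nonneg _)]
      have h2 := hsep _ hyp
      calc (1:ℝ)/2 ≤ (2/3) := by norm_num
        _ = ‖x₀‖⁻¹ * (2/3 * ‖x₀‖) := by field_simp
        _ ≤ ‖x₀‖⁻¹ * ‖x₀ - (‖x₀‖:𝕜) • y‖ := by gcongr
  -- the recursive construction
  set T := {px : Submodule 𝕜 X × X // Inv px.1 ∧ ‖px.2‖ = 1 ∧ ∀ y ∈ px.1, (1:ℝ)/2 ≤ ‖px.2 - y‖}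
    with hT
  have hsucc : ∀ (p : Submodule 𝕜 X) (v : X), Inv p → Inv (p ⊔ Submodule.span 𝕜 {v}) := by
    intro p v hp
    obtain ⟨W, hWfd, rfl⟩ := hp.2.2
    haveI := hWfd
    haveI : FiniteDimensional 𝕜 (Submodule.span 𝕜 {v}) :=
      FiniteDimensional.span_of_finite 𝕜 (Set.finite_singleton v)
    haveI : FiniteDimensional 𝕜 ((W ⊔ Submodule.span 𝕜 {v} : Submodule 𝕜 X)) :=
      Submodule.finiteDimensional_sup W _
    refine ⟨?_, le_trans le_sup_left le_sup_left, W ⊔ Submodule.span 𝕜 {v}, inferInstance,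
      (sup_assoc R W _)⟩
    rw [sup_assoc]
    exact aux_isClosed_sup R _ hRc
  have hT0 : ∃ t : T, t.1.1 = R := by
    obtain ⟨u, hu, husep⟩ := hstep R hInvR
    exact ⟨⟨(R, u), hInvR, hu, husep⟩, rfl⟩
  obtain ⟨t0, ht0⟩ := hT0
  set seq : ℕ → T := fun n => Nat.rec t0 (fun _ t =>
    ⟨(t.1.1 ⊔ Submodule.span 𝕜 {t.1.2},
      Classical.choose (hstep _ (hsucc t.1.1 t.1.2 t.2.1))),
     hsucc t.1.1 t.1.2 t.2.1,
     (Classical.choose_spec (hstep _ (hsucc t.1.1 t.1.2 t.2.1))).1,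
     (Classical.choose_spec (hstep _ (hsucc t.1.1 t.1.2 t.2.1))).2⟩) n with hseq
  set p : ℕ → Submodule 𝕜 X := fun n => (seq n).1.1 with hp
  set x : ℕ → X := fun n => (seq n).1.2 with hx
  have hpsucc : ∀ n, p (n+1) = p n ⊔ Submodule.span 𝕜 {x n} := fun n => rfl
  have hmono : ∀ m n, m ≤ n → p m ≤ p n := by
    intro m n hmn
    induction n with
    | zero => rw [Nat.le_zero.mp hmn]
    | succ k ih =>
      rcases Nat.lt_or_ge m (k+1) with h | h
      · exact le_trans (ih (Nat.lt_succ_iff.mp h)) (by rw [hpsucc]; exact le_sup_left)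
      · rw [Nat.le_antisymm hmn h]
  have hxmem : ∀ m, x m ∈ p (m+1) := by
    intro m
    rw [hpsucc]
    exact Submodule.mem_sup_right (Submodule.mem_span_singleton_self _)
  have hxnorm : ∀ n, ‖x n‖ = 1 := fun n => (seq n).2.2.1
  have hxsep : ∀ n, ∀ y ∈ p n, (1:ℝ)/2 ≤ ‖x n - y‖ := fun n => (seq n).2.2.2
  have hRlep : ∀ n, R ≤ p n := fun n => (seq n).2.1.2.1
  have hUsep : ∀ m n, m < n → (1:ℝ)/2 ≤ ‖U (x n) - U (x m)‖ := by
    intro m n hmn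
    have hy : (x n - U (x n)) - (x m - U (x m)) + x m ∈ p n := by
      refine Submodule.add_mem _ (Submodule.sub_mem _ ?_ ?_) ?_
      · exact hRlep n (hVR (x n))
      · exact hRlep n (hVR (x m))
      · exact hmono (m+1) n hmn (hxmem m)
    have h := hxsep n _ hy
    have heq : x n - ((x n - U (x n)) - (x m - U (x m)) + x m) = U (x n) - U (x m) := by abel
    rwa [heq] at h
  have hxK : ∀ n, U (x n) ∈ K := by
    intro n
    exact hUK ⟨x n, by simp [mem_closedBall, dist_eq_norm, hxnorm n], rfl⟩
  obtain ⟨w, hwK, φ, hφ, hconv⟩ := hK.tendsto_subseq hxK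
  obtain ⟨Nn, hNn⟩ := Metric.tendsto_atTop.mp hconv (1/4) (by norm_num)
  have h1 := hNn Nn le_rfl
  have h2 := hNn (Nn + 1) (Nat.le_succ _)
  have h3 : dist (U (x (φ (Nn+1)))) (U (x (φ Nn))) < 1/2 := by
    calc dist (U (x (φ (Nn+1)))) (U (x (φ Nn)))
        ≤ dist (((fun n => U (x n)) ∘ φ) (Nn+1)) w + dist (((fun n => U (x n)) ∘ φ) Nn) w :=
          dist_triangle_right _ _ _
      _ < 1/4 + 1/4 := by exact add_lt_add h2 h1
      _ = 1/2 := by norm_num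
  have h4 := hUsep (φ Nn) (φ (Nn+1)) (hφ (Nat.lt_succ_self Nn))
  rw [dist_eq_norm] at h3
  linarith

lemma aux_riesz (U : X →L[𝕜] X) (hU : IsCompactOperator U) :
    ∃ S F : X →L[𝕜] X, FiniteDimensional 𝕜 (LinearMap.range (F : X →ₗ[𝕜] X)) ∧
      ∀ x, S x - U (S x) = x - F x := by
  set V : X →L[𝕜] X := 1 - U with hV
  have hVapp : ∀ x, V x = x - U x := fun x => by
    simp [hV, ContinuousLinearMap.sub_apply]
  haveI hNfd : FiniteDimensional 𝕜 (LinearMap.ker (V : X →ₗ[𝕜] X)) := aux_ker_findim U hU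
  set N := LinearMap.ker (V : X →ₗ[𝕜] X) with hN
  obtain ⟨f, hf⟩ := Submodule.ClosedComplemented.of_finiteDimensional N
  set P : X →L[𝕜] X := N.subtypeL.comp f with hP
  have hPmem : ∀ x, P x ∈ N := fun x => (f x).2
  have hPN : ∀ x, x ∈ N → P x = x := by
    intro x hx
    have := hf ⟨x, hx⟩
    simpa [hP] using congrArg Subtype.val this
  set M := LinearMap.ker (P : X →ₗ[𝕜] X) with hM
  have hMc : IsClosed (M : Set X) := by
    have h : (M : Set X) = P ⁻¹' {0} := by
      ext x; simp [hM, LinearMap.mem_ker]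
    rw [h]; exact isClosed_singleton.preimage P.continuous
  haveI : CompleteSpace M := hMc.completeSpace_coe
  have hNM : ∀ x, x ∈ N → x ∈ M → x = 0 := by
    intro x hxN hxM
    have h1 : P x = x := hPN x hxN
    have h2 : P x = 0 := LinearMap.mem_ker.mp hxM
    rw [h2] at h1; exact h1.symm
  have hsub : ∀ x, x - P x ∈ M := by
    intro x
    have : P (x - P x) = 0 := by
      rw [map_sub, hPN (P x) (hPmem x), sub_self]
    exact LinearMap.mem_ker.mpr this
  have hVP : ∀ x, V (P x) = 0 := fun x => LinearMap.mem_ker.mp (hPmem x)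
  have hVx : ∀ x, V x = V (x - P x) := fun x => by rw [map_sub, hVP, sub_zero]
  set g : M →L[𝕜] X := V.comp M.subtypeL with hg
  have hgapp : ∀ m : M, g m = V (m : X) := fun m => rfl
  -- Step B : bounded below
  obtain ⟨K, hK, hUK⟩ := hU.image_closedBall_subset_compact 1
  have hbdd : ∃ c : NNReal, ∀ m : M, ‖m‖ ≤ c * ‖g m‖ := by
    by_contra hcon
    push_neg at hcon
    choose z hz using fun n : ℕ => hcon (n + 1)
    have hzpos : ∀ n, (0 : ℝ) < ‖z n‖ := by
      intro n
      rcases (norm_nonneg (z n)).lt_or_eq with h | h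
      · exact h
      · exfalso
        have := hz n
        rw [← h] at this
        have : ((n : NNReal) + 1 : NNReal) * ‖g (z n)‖ < 0 := this
        nlinarith [norm_nonneg (g (z n)), (by positivity : (0:ℝ) < ((n : NNReal) + 1 : NNReal))]
    set y : ℕ → X := fun n => ((‖(z n : X)‖ : 𝕜))⁻¹ • (z n : X) with hy
    have hznorm : ∀ n, ‖(z n : X)‖ = ‖z n‖ := fun n => rfl
    have hyM : ∀ n, y n ∈ M := fun n => M.smul_mem _ (z n).2
    have hynorm : ∀ n, ‖y n‖ = 1 := by
      intro n
      rw [hy]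
      simp only [norm_smul, norm_inv, RCLike.norm_ofReal, abs_of_nonneg (norm_nonneg _)]
      rw [hznorm, inv_mul_cancel₀ (hzpos n).ne']
    have hVy : ∀ n, ‖V (y n)‖ < 1 / (n + 1) := by
      intro n
      have h1 : V (y n) = ((‖(z n : X)‖ : 𝕜))⁻¹ • V (z n : X) := by
        rw [hy]; exact map_smul V _ _
      rw [h1, norm_smul, norm_inv, RCLike.norm_ofReal, abs_of_nonneg (norm_nonneg _), hznorm]
      have h2 := hz n
      have h3 : ‖g (z n)‖ = ‖V (z n : X)‖ := rfl
      rw [h3] at h2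
      have h2' : ((n : ℝ) + 1) * ‖V (z n : X)‖ < ‖z n‖ := by
        have : ((((n : NNReal) + 1 : NNReal)) : ℝ) = (n : ℝ) + 1 := by push_cast; ring
        rw [this] at h2; exact h2
      have hn1 : (0:ℝ) < (n:ℝ) + 1 := by positivity
      rw [inv_mul_lt_iff₀ (hzpos n), mul_one_div, lt_div_iff₀ hn1]
      nlinarith
    -- subsequence argument
    have hyK : ∀ n, U (y n) ∈ K := by
      intro n
      apply hUK
      exact ⟨y n, by simp [mem_closedBall, dist_eq_norm, hynorm n], rfl⟩
    obtain ⟨w, hwK, φ, hφ, hconv⟩ := hK.tendsto_subseq hyK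
    have hVy0 : Tendsto (fun n => V (y (φ n))) atTop (nhds 0) := by
      rw [tendsto_zero_iff_norm_tendsto_zero]
      apply squeeze_zero (fun n => norm_nonneg _) (fun n => ?_)
        tendsto_one_div_add_atTop_nhds_zero_nat
      refine le_trans (hVy (φ n)).le ?_
      gcongr
      exact_mod_cast hφ.le_apply
    have hyconv : Tendsto (fun n => y (φ n)) atTop (nhds w) := by
      have h := hVy0.add hconv
      rw [zero_add] at h
      refine h.congr fun n => ?_
      rw [hVapp]
      simp only [Function.comp_apply]
      abel
    have hwM : w ∈ M := by
      have : ∀ n, y (φ n) ∈ (M : Set X) := fun n => hyM (φ n)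
      exact hMc.mem_of_tendsto hyconv (Filter.Eventually.of_forall this)
    have hwnorm : ‖w‖ = 1 := by
      have h1 : Tendsto (fun n => ‖y (φ n)‖) atTop (nhds ‖w‖) :=
        (continuous_norm.tendsto w).comp hyconv
      have h2 : (fun n => ‖y (φ n)‖) = fun _ => (1:ℝ) := funext fun n => hynorm (φ n)
      rw [h2] at h1
      exact (tendsto_const_nhds_iff.mp h1).symm
    have hVw : V w = 0 := by
      have h1 : Tendsto (fun n => V (y (φ n))) atTop (nhds (V w)) :=
        (V.continuous.tendsto w).comp hyconv
      exact tendsto_nhds_unique h1 hVy0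
    have : w = 0 := hNM w (LinearMap.mem_ker.mpr hVw) hwM
    rw [this, norm_zero] at hwnorm
    norm_num at hwnorm
  obtain ⟨c, hc⟩ := hbdd
  -- Step C : closed range
  have hanti : AntilipschitzWith c g := g.antilipschitz_of_bound hc
  have hRc : IsClosed (Set.range g) := hanti.isClosed_range g.uniformContinuous
  set R : Submodule 𝕜 X := LinearMap.range (g : M →ₗ[𝕜] X) with hR
  have hRcoe : (R : Set X) = Set.range ⇑g := by
    ext v; simp [hR, LinearMap.mem_range, Set.mem_range]
  have hRc' : IsClosed (R : Set X) := by rw [hRcoe]; exact hRc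
  have hVR : ∀ x, V x ∈ R := by
    intro x
    refine LinearMap.mem_range.mpr ⟨⟨x - P x, hsub x⟩, ?_⟩
    rw [ContinuousLinearMap.coe_coe, hgapp, ← hVx]
  -- Step D : finite codimension
  haveI hQfd : FiniteDimensional 𝕜 (X ⧸ R) := by
    refine aux_findim_quot U hU R hRc' (fun x => ?_)
    rw [← hVapp]; exact hVR x
  -- Step E : assemble
  haveI : CompleteSpace R := hRc'.completeSpace_coe
  set g' : M →L[𝕜] R := g.codRestrict R (fun m => LinearMap.mem_range.mpr ⟨m, rfl⟩) with hg'
  have hker : LinearMap.ker (g' : M →ₗ[𝕜] R) = ⊥ := by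
    rw [LinearMap.ker_eq_bot']
    intro m hm
    have h0 : g m = 0 := by
      have := congrArg Subtype.val hm
      simpa [hg'] using this
    have h1 : V (m : X) = 0 := by rw [← hgapp]; exact h0
    have h2 : (m : X) = 0 := hNM _ (LinearMap.mem_ker.mpr h1) m.2
    exact Subtype.ext h2
  have hrange : LinearMap.range (g' : M →ₗ[𝕜] R) = ⊤ := by
    rw [LinearMap.range_eq_top]
    rintro ⟨v, hv⟩
    obtain ⟨m, hm⟩ := LinearMap.mem_range.mp hv
    exact ⟨m, Subtype.ext (by simpa [hg'] using hm)⟩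
  set e := ContinuousLinearEquiv.ofBijective g' hker hrange with he
  obtain ⟨π, hπ⟩ := Submodule.ClosedComplemented.of_quotient_finiteDimensional hRc'
  set S : X →L[𝕜] X := M.subtypeL.comp ((e.symm : R →L[𝕜] M).comp π) with hS
  set Q : X →L[𝕜] X := R.subtypeL.comp π with hQ
  set F : X →L[𝕜] X := 1 - Q with hF
  have hSx : ∀ x, V (S x) = Q x := by
    intro x
    have h1 : S x = ((e.symm (π x) : M) : X) := rfl
    have h2 : V (S x) = g (e.symm (π x)) := by rw [h1]; rfl
    have h3 : g (e.symm (π x)) = ((g' (e.symm (π x)) : R) : X) := rfl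
    have h4 : g' (e.symm (π x)) = e (e.symm (π x)) := rfl
    rw [h2, h3, h4, e.apply_symm_apply]
    rfl
  have hQQ : ∀ x, Q (Q x) = Q x := by
    intro x
    have : π ((π x : X)) = π x := hπ (π x)
    simp only [hQ, ContinuousLinearMap.comp_apply, Submodule.subtypeL_apply]
    rw [this]
  have key : ∀ x, S x - U (S x) = x - F x := by
    intro x
    have h1 : S x - U (S x) = V (S x) := (hVapp (S x)).symm
    rw [h1, hSx, hF]
    simp [ContinuousLinearMap.sub_apply]
  have hFQ : ∀ x, Q (F x) = 0 := by
    intro x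
    have : F x = x - Q x := by simp [hF, ContinuousLinearMap.sub_apply]
    rw [this, map_sub, hQQ, sub_self]
  haveI hkerfd : FiniteDimensional 𝕜 (LinearMap.ker ((Q : X →L[𝕜] X) : X →ₗ[𝕜] X)) := by
    set l : LinearMap.ker ((Q : X →L[𝕜] X) : X →ₗ[𝕜] X) →ₗ[𝕜] X ⧸ R :=
      R.mkQ.comp ((LinearMap.ker ((Q : X →L[𝕜] X) : X →ₗ[𝕜] X)).subtype) with hl
    have hinj : Function.Injective l := by
      rw [← LinearMap.ker_eq_bot, LinearMap.ker_eq_bot']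
      rintro ⟨v, hv⟩ hlv
      have hvR : v ∈ R := by
        have : R.mkQ v = 0 := hlv
        rwa [Submodule.mkQ_apply, Submodule.Quotient.mk_eq_zero] at this
      have h1 : Q v = v := by
        have : π v = ⟨v, hvR⟩ := hπ ⟨v, hvR⟩
        simp only [hQ, ContinuousLinearMap.comp_apply, Submodule.subtypeL_apply, this]
      have h2 : Q v = 0 := LinearMap.mem_ker.mp hv
      rw [h2] at h1
      exact Subtype.ext h1.symm
    exact FiniteDimensional.of_injective l hinj
  have hle : LinearMap.range (F : X →ₗ[𝕜] X) ≤ LinearMap.ker ((Q : X →L[𝕜] X) : X →ₗ[𝕜] X) := by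
    rintro v ⟨x, rfl⟩
    exact LinearMap.mem_ker.mpr (hFQ x)
  exact ⟨S, F, Submodule.finiteDimensional_of_le hle, key⟩

end RieszTheory

section ApxLemmas

variable {𝕜 X : Type*} [RCLike 𝕜] [NormedAddCommGroup X] [NormedSpace 𝕜 X]
  (I : IdealOn 𝕜 X)

lemma apx_of_finrank (F : X →L[𝕜] X)
    (h : FiniteDimensional 𝕜 (LinearMap.range (F : X →ₗ[𝕜] X))) : F ∈ I.apx :=
  ⟨I.finrank_mem F h, fun ε hε => ⟨F, h, by rw [sub_self, I.n_zero]; exact hε⟩⟩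

lemma apx_neg {T : X →L[𝕜] X} (h : T ∈ I.apx) : -T ∈ I.apx := by
  refine ⟨I.neg_mem h.1, fun ε hε => ?_⟩
  obtain ⟨G, hG, hn⟩ := h.2 ε hε
  refine ⟨-G, ?_, ?_⟩
  · rw [ContinuousLinearMap.coe_neg, LinearMap.range_neg]
    exact hG
  · have he : -T - -G = -(T - G) := by abel
    rw [he, I.n_neg]
    exact hn

lemma apx_add {S T : X →L[𝕜] X} (hS : S ∈ I.apx) (hT : T ∈ I.apx) : S + T ∈ I.apx := by
  refine ⟨I.add_mem hS.1 hT.1, fun ε hε => ?_⟩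
  obtain ⟨G, hG, hnG⟩ := hS.2 (ε/2) (by positivity)
  obtain ⟨H, hH, hnH⟩ := hT.2 (ε/2) (by positivity)
  refine ⟨G + H, ?_, ?_⟩
  · haveI := hG; haveI := hH
    refine Submodule.finiteDimensional_of_le (S₂ := LinearMap.range (G : X →ₗ[𝕜] X) ⊔
      LinearMap.range (H : X →ₗ[𝕜] X)) ?_
    rintro v ⟨x, rfl⟩
    exact Submodule.add_mem_sup (LinearMap.mem_range_self _ x) (LinearMap.mem_range_self _ x)
  · have he : S + T - (G + H) = (S - G) + (T - H) := by abel
    rw [he]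
    calc I.n ((S - G) + (T - H)) ≤ I.n (S - G) + I.n (T - H) := I.n_add_le _ _
      _ < ε/2 + ε/2 := add_lt_add hnG hnH
      _ = ε := by ring

lemma apx_comp_right (B : X →L[𝕜] X) {T : X →L[𝕜] X} (h : T ∈ I.apx) :
    T.comp B ∈ I.apx := by
  refine ⟨I.comp_mem_right B h.1, fun ε hε => ?_⟩
  have hB1 : (0:ℝ) < ‖B‖ + 1 := by positivity
  obtain ⟨G, hG, hnG⟩ := h.2 (ε / (‖B‖ + 1)) (by positivity)
  refine ⟨G.comp B, ?_, ?_⟩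
  · haveI := hG
    refine Submodule.finiteDimensional_of_le (S₂ := LinearMap.range (G : X →ₗ[𝕜] X)) ?_
    rintro v ⟨x, rfl⟩
    exact LinearMap.mem_range_self _ _
  · have he : T.comp B - G.comp B = (T - G).comp B := by
      rw [ContinuousLinearMap.sub_comp]
    have hTG : T - G ∈ I.mem := by
      rw [sub_eq_add_neg]
      exact I.add_mem h.1 (I.neg_mem (I.finrank_mem G hG))
    rw [he]
    calc I.n ((T - G).comp B) ≤ I.n (T - G) * ‖B‖ := I.n_comp_right B hTG
      _ ≤ I.n (T - G) * (‖B‖ + 1) := by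
          have := I.n_nonneg (T - G); nlinarith [norm_nonneg B]
      _ < (ε / (‖B‖ + 1)) * (‖B‖ + 1) := by
          exact mul_lt_mul_of_pos_right hnG hB1
      _ = ε := by field_simp

end ApxLemmas

/-- **Remark 2.2.** Let `X` be a Banach space and `I ⊆ K` a Banach operator ideal contained in
the compact operators, with quotient algebra `𝔄 = I(X)/cl_I(F(X))`.  If `U ∈ I(X)` and the
coset `[U]` is a unit element of `𝔄` (i.e. `U∘T - T ∈ cl_I(F(X))` and `T∘U - T ∈ cl_I(F(X))`
for every `T ∈ I(X)`), then invertibility of `1 - [U]` in the unitisation (which holds by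
radicality) forces `U ∈ cl_I(F(X))`, i.e. `[U] = 0`.  Hence `𝔄` has no unit element. -/
theorem stmt_19 {𝕜 X : Type*} [RCLike 𝕜] [NormedAddCommGroup X] [NormedSpace 𝕜 X]
    [CompleteSpace X] (I : IdealOn 𝕜 X)
    (hcpt : ∀ T ∈ I.mem, IsCompactOperator T)
    (U : X →L[𝕜] X) (hU : U ∈ I.mem)
    (hunit : ∀ T ∈ I.mem, U.comp T - T ∈ I.apx ∧ T.comp U - T ∈ I.apx) :
    U ∈ I.apx := by
  obtain ⟨S, F, hFfd, hkey⟩ := aux_riesz U (hcpt U hU)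
  have hid : U = (U - U.comp U).comp S + U.comp F := by
    ext x
    have h2 := congrArg U (hkey x)
    rw [map_sub, map_sub] at h2
    simp only [ContinuousLinearMap.add_apply, ContinuousLinearMap.comp_apply,
      ContinuousLinearMap.sub_apply]
    rw [h2]
    abel
  have hA1 : U.comp U - U ∈ I.apx := (hunit U hU).1
  have hA : (U - U.comp U).comp S ∈ I.apx := by
    have := apx_comp_right I S (apx_neg I hA1)
    rwa [neg_sub] at this
  have hB : U.comp F ∈ I.apx := by
    refine apx_of_finrank I _ ?_
    have hc : ((U.comp F : X →L[𝕜] X) : X →ₗ[𝕜] X) =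
        (U : X →ₗ[𝕜] X).comp (F : X →ₗ[𝕜] X) := rfl
    rw [hc, LinearMap.range_comp]
    haveI := hFfd
    infer_instance
  rw [hid]
  exact apx_add I hA hB
end
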